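/- arXiv:2210.15830 — 4 statements merged into one kernel-verified Lean document; each statement's English description precedes it below -/
import Mathlib

section
/- Let N ≥ 1, σ: ℝ^{N-1} → ℝ be Lipschitz with Lipschitz constant < 1, and ω = {(x_1, x') ∈ ℝ × ℝ^{N-1} : x_1 > σ(x')}. Let X = Σ_ν X^ν ∂/∂x_ν be a C^1 vector field on ℝ^N such that X(x) is tangent to the boundary {x_1 = σ(x')} for almost every boundary point x (i.e. X^1(σ(x'),x') = Σ_{ν≥2} X^ν(σ(x'),x') ∂σ/∂x_ν(x') for a.e. x'). Then Σ_ν X^ν D_ν 1_ω = 0 in the sense of distributions, where 1_ω is the indicator function of ω. -/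
open MeasureTheory Set Filter Topology Metric

section Aux

variable {m : ℕ}

local notation "Y" => (Fin m → ℝ)
local notation "E" => (ℝ × (Fin m → ℝ))

lemma isom_left (y : Fin m → ℝ) : Isometry (fun t : ℝ => ((t, y) : E)) := by
  intro a b
  simp [Prod.edist_eq]

lemma isom_right (t : ℝ) : Isometry (fun y : Fin m → ℝ => ((t, y) : E)) := by
  intro a b
  simp [Prod.edist_eq]

/-- slices of a continuous compactly supported function are integrable -/
lemma slice_integrable {f : E → ℝ} (hf : Continuous f) (hc : HasCompactSupport f)
    (y : Fin m → ℝ) : Integrable (fun t : ℝ => f (t, y)) volume := by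
  have : HasCompactSupport (fun t : ℝ => f (t, y)) :=
    hc.comp_isClosedEmbedding (isom_left y).isClosedEmbedding
  exact (hf.comp (by fun_prop)).integrable_of_hasCompactSupport this

lemma hasDerivAt_slice1 {f : E → ℝ} (hf : ContDiff ℝ 1 f) (t : ℝ) (y : Fin m → ℝ) :
    HasDerivAt (fun s : ℝ => f (s, y)) (fderiv ℝ f (t, y) (1, 0)) t := by
  have h1 : HasFDerivAt f (fderiv ℝ f (t, y)) (t, y) :=
    (hf.differentiable one_ne_zero (t, y)).hasFDerivAt
  have h2 : HasDerivAt (fun s : ℝ => ((s, y) : E)) ((1 : ℝ), (0 : Fin m → ℝ)) t :=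
    (hasDerivAt_id t).prodMk (hasDerivAt_const t y)
  exact h1.comp_hasDerivAt t h2

lemma hasDerivAt_slice2 {f : E → ℝ} (hf : ContDiff ℝ 1 f) (t : ℝ) (y e : Fin m → ℝ)
    (h₀ : ℝ) :
    HasDerivAt (fun h : ℝ => f (t, y + h • e)) (fderiv ℝ f (t, y + h₀ • e) (0, e)) h₀ := by
  have h1 : HasFDerivAt f (fderiv ℝ f (t, y + h₀ • e)) (t, y + h₀ • e) :=
    (hf.differentiable one_ne_zero _).hasFDerivAt
  have h2 : HasDerivAt (fun h : ℝ => ((t, y + h • e) : E)) ((0 : ℝ), e) h₀ := by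
    refine (hasDerivAt_const h₀ t).prodMk ?_
    simpa using (((hasDerivAt_id h₀).smul_const e).const_add y)
  exact h1.comp_hasDerivAt h₀ h2

/-- difference of integrals over `Ioi` as an interval integral -/
lemma Ioi_sub_Ioi {g : ℝ → ℝ} (hg : Integrable g volume) (a b : ℝ) :
    (∫ t in Ioi a, g t) - ∫ t in Ioi b, g t = ∫ t in a..b, g t := by
  have h1 := intervalIntegral.integral_Iic_add_Ioi (f := g) (b := a) hg.integrableOn hg.integrableOn
  have h2 := intervalIntegral.integral_Iic_add_Ioi (f := g) (b := b) hg.integrableOn hg.integrableOn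
  have h3 := intervalIntegral.integral_Iic_sub_Iic (f := g) (μ := volume)
    (a := a) (b := b) hg.integrableOn hg.integrableOn
  linarith

end Aux

section Aux2

variable {m : ℕ}

local notation "E" => (ℝ × (Fin m → ℝ))

/-- Fubini for the special Lipschitz epigraph domain. -/
lemma fubini_epigraph {σ : (Fin m → ℝ) → ℝ} (hσ : Continuous σ)
    {g : E → ℝ} (hg : Continuous g) (hgc : HasCompactSupport g) :
    ∫ x in {x : E | σ x.2 < x.1}, g x
      = ∫ y, ∫ t in Ioi (σ y), g (t, y) := by
  have hΩ : MeasurableSet {x : E | σ x.2 < x.1} :=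
    (isOpen_lt (hσ.comp continuous_snd) continuous_fst).measurableSet
  have hgi : Integrable g volume := hg.integrable_of_hasCompactSupport hgc
  rw [← integral_indicator hΩ]
  have hii : Integrable ({x : E | σ x.2 < x.1}.indicator g) volume := hgi.indicator hΩ
  rw [Measure.volume_eq_prod] at hii ⊢
  rw [integral_prod_symm _ hii]
  refine integral_congr_ae (Eventually.of_forall fun y => ?_)
  have : ∀ t : ℝ, ({x : E | σ x.2 < x.1}.indicator g) (t, y)
      = (Ioi (σ y)).indicator (fun t => g (t, y)) t := by
    intro t
    by_cases h : σ y < t <;> simp [Set.indicator_apply, h]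
  show (∫ t : ℝ, {x : E | σ x.2 < x.1}.indicator g (t, y)) = _
  rw [integral_congr_ae (Eventually.of_forall this), integral_indicator measurableSet_Ioi]

/-- FTC on `Ioi` for a slice of a `C¹` compactly supported function. -/
lemma ftc_slice {f : E → ℝ} (hf : ContDiff ℝ 1 f) (hfc : HasCompactSupport f)
    (a : ℝ) (y : Fin m → ℝ) :
    ∫ t in Ioi a, fderiv ℝ f (t, y) (1, 0) = - f (a, y) := by
  have hcs : HasCompactSupport (fun t : ℝ => f (t, y)) :=
    hfc.comp_isClosedEmbedding (isom_left y).isClosedEmbedding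
  have hcont : Continuous (fun t : ℝ => f (t, y)) := hf.continuous.comp (by fun_prop)
  have hder : ∀ t ∈ Ioi a, HasDerivAt (fun s : ℝ => f (s, y))
      (fderiv ℝ f (t, y) (1, 0)) t := fun t _ => hasDerivAt_slice1 hf t y
  have hint : IntegrableOn (fun t => fderiv ℝ f (t, y) (1, 0)) (Ioi a) volume := by
    have hc2 : Continuous fun t : ℝ => fderiv ℝ f (t, y) (1, 0) :=
      ((hf.continuous_fderiv one_ne_zero).comp (by fun_prop : Continuous fun t : ℝ => ((t, y) : E))).clm_apply continuous_const
    have hs2 : HasCompactSupport fun t : ℝ => fderiv ℝ f (t, y) (1, 0) := by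
      have h3 : HasCompactSupport fun t : ℝ => fderiv ℝ f (t, y) :=
        (hfc.fderiv ℝ).comp_isClosedEmbedding (isom_left y).isClosedEmbedding
      exact h3.comp_left (g := fun A : E →L[ℝ] ℝ => A (1, 0)) rfl
    exact (hc2.integrable_of_hasCompactSupport hs2).integrableOn
  have htend : Tendsto (fun t : ℝ => f (t, y)) atTop (𝓝 0) := by
    obtain ⟨r, hr⟩ := hcs.isBounded.subset_closedBall 0
    refine Tendsto.congr' ?_ tendsto_const_nhds
    filter_upwards [eventually_gt_atTop r] with t ht
    by_contra h
    have : t ∈ tsupport fun s : ℝ => f (s, y) := subset_tsupport _ (by simpa using Ne.symm h)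
    have := hr this
    simp only [Metric.mem_closedBall, Real.dist_eq, sub_zero] at this
    linarith [le_abs_self t]
  have := integral_Ioi_of_hasDerivAt_of_tendsto
    (hcont.continuousWithinAt) hder hint htend
  rw [this]; ring

end Aux2

section Key

variable {m : ℕ}

local notation "E" => (ℝ × (Fin m → ℝ))

set_option maxHeartbeats 2000000 in
lemma key_nu {σ : (Fin m → ℝ) → ℝ} {L : NNReal} (hσ : LipschitzWith L σ)
    {f : E → ℝ} (hf : ContDiff ℝ 1 f) (hfc : HasCompactSupport f)
    (e : Fin m → ℝ) :
    ∫ y, (∫ t in Ioi (σ y), fderiv ℝ f (t, y) (0, e))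
      = ∫ y, f (σ y, y) * fderiv ℝ σ y e := by
  have hfd : Differentiable ℝ f := hf.differentiable one_ne_zero
  have hfcont : Continuous f := hf.continuous
  -- support radius
  obtain ⟨R, hRb⟩ := hfc.isBounded.subset_closedBall 0
  set R0 : ℝ := max R 0 with hR0def
  have hR0 : 0 ≤ R0 := le_max_right _ _
  have hfz : ∀ z : E, R0 < ‖z‖ → f z = 0 := by
    intro z hz
    refine image_eq_zero_of_notMem_tsupport fun hmem => ?_
    have := hRb hmem
    rw [mem_closedBall, dist_zero_right] at this
    have : ‖z‖ ≤ R0 := le_trans this (le_max_left _ _)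
    linarith
  -- Lipschitz constant of f
  obtain ⟨Kb, hKb⟩ := (hfc.fderiv ℝ).exists_bound_of_continuous (hf.continuous_fderiv one_ne_zero)
  set K0 : ℝ := max Kb 0 with hK0def
  have hK0 : 0 ≤ K0 := le_max_right _ _
  have hlipf : LipschitzWith K0.toNNReal f := by
    refine lipschitzWith_of_nnnorm_fderiv_le hfd fun x => ?_
    rw [← NNReal.coe_le_coe, coe_nnnorm, Real.coe_toNNReal _ hK0]
    exact le_trans (hKb x) (le_max_left _ _)
  have hflip : ∀ (t : ℝ) (y z : Fin m → ℝ), |f (t, z) - f (t, y)| ≤ K0 * ‖z - y‖ := by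
    intro t y z
    have := hlipf.dist_le_mul (t, z) (t, y)
    rw [Real.coe_toNNReal _ hK0] at this
    rw [← Real.dist_eq]
    refine le_trans this ?_
    have h6 : dist ((t, z) : E) ((t, y) : E) = ‖z - y‖ := by
      rw [Prod.dist_eq, dist_self, dist_eq_norm]
      exact max_eq_right (norm_nonneg _)
    rw [h6]
  -- sup bound of f
  obtain ⟨Mb, hMb⟩ := hfc.exists_bound_of_continuous hfcont
  set Mf : ℝ := max Mb 0 with hMfdef
  have hMf0 : 0 ≤ Mf := le_max_right _ _
  have hMf : ∀ z : E, |f z| ≤ Mf := fun z => le_trans (by simpa using hMb z) (le_max_left _ _)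
  -- slices are integrable
  have intSlice : ∀ y : Fin m → ℝ, Integrable (fun t : ℝ => f (t, y)) volume :=
    fun y => slice_integrable hfcont hfc y
  -- the function G
  set G : (Fin m → ℝ) → ℝ := fun y => ∫ t in Ioi (σ y), f (t, y) with hGdef
  set CG : ℝ := 2 * R0 * K0 + Mf * (L : ℝ) with hCGdef
  have hCG0 : 0 ≤ CG := by positivity
  have hGlipb : ∀ y z : Fin m → ℝ, |G z - G y| ≤ CG * ‖z - y‖ := by
    intro y z
    have h1 : G z - G y = (∫ t in Ioi (σ z), (f (t, z) - f (t, y)))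
        + ((∫ t in Ioi (σ z), f (t, y)) - ∫ t in Ioi (σ y), f (t, y)) := by
      rw [integral_sub (intSlice z).integrableOn (intSlice y).integrableOn]
      simp only [hGdef]; ring
    have hfirst : |∫ t in Ioi (σ z), (f (t, z) - f (t, y))| ≤ 2 * R0 * (K0 * ‖z - y‖) := by
      have hd : Integrable (fun t : ℝ => f (t, z) - f (t, y)) volume :=
        (intSlice z).sub (intSlice y)
      have e1 : |∫ t in Ioi (σ z), (f (t, z) - f (t, y))|
          ≤ ∫ t in Ioi (σ z), |f (t, z) - f (t, y)| :=
        by simpa [Real.norm_eq_abs] using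
          norm_integral_le_integral_norm (μ := volume.restrict (Ioi (σ z)))
            (fun t : ℝ => f (t, z) - f (t, y))
      have e2 : (∫ t in Ioi (σ z), |f (t, z) - f (t, y)|)
          ≤ ∫ t : ℝ, |f (t, z) - f (t, y)| :=
        setIntegral_le_integral hd.abs (Eventually.of_forall fun t => abs_nonneg _)
      have e3 : (∫ t : ℝ, |f (t, z) - f (t, y)|)
          ≤ ∫ t : ℝ, (Icc (-R0) R0).indicator (fun _ => K0 * ‖z - y‖) t := by
        refine integral_mono hd.abs ?_ ?_
        · exact (integrable_indicator_iff measurableSet_Icc).2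
            (integrableOn_const measure_Icc_lt_top.ne)
        · intro t
          by_cases ht : |t| ≤ R0
          · have htm : t ∈ Icc (-R0) R0 := abs_le.1 ht
            rw [indicator_of_mem htm]
            exact hflip t y z
          · push_neg at ht
            have h1 : f (t, z) = 0 := hfz _ (lt_of_lt_of_le ht (norm_fst_le ((t, z) : E)))
            have h2 : f (t, y) = 0 := hfz _ (lt_of_lt_of_le ht (norm_fst_le ((t, y) : E)))
            simp only [h1, h2, sub_zero, abs_zero]
            exact indicator_nonneg (fun _ _ => by positivity) t
      have e4 : (∫ t : ℝ, (Icc (-R0) R0).indicator (fun _ => K0 * ‖z - y‖) t)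
          = 2 * R0 * (K0 * ‖z - y‖) := by
        rw [integral_indicator_const _ measurableSet_Icc, Real.volume_real_Icc,
          max_eq_left (by linarith), smul_eq_mul]
        ring
      linarith
    have hsecond : |(∫ t in Ioi (σ z), f (t, y)) - ∫ t in Ioi (σ y), f (t, y)|
        ≤ Mf * ((L : ℝ) * ‖z - y‖) := by
      rw [Ioi_sub_Ioi (intSlice y) (σ z) (σ y)]
      have := intervalIntegral.norm_integral_le_of_norm_le_const
        (a := σ z) (b := σ y) (C := Mf) (f := fun t => f (t, y))
        (fun x _ => by simpa using hMf (x, y))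
      rw [Real.norm_eq_abs] at this
      refine le_trans this ?_
      have h5 : |σ y - σ z| ≤ (L : ℝ) * ‖z - y‖ := by
        have := hσ.dist_le_mul z y
        rw [Real.dist_eq, dist_eq_norm] at this
        rw [abs_sub_comm]
        exact this
      have := mul_le_mul_of_nonneg_left h5 hMf0
      linarith
    calc |G z - G y| ≤ |∫ t in Ioi (σ z), (f (t, z) - f (t, y))|
          + |(∫ t in Ioi (σ z), f (t, y)) - ∫ t in Ioi (σ y), f (t, y)| := by
            rw [h1]; exact abs_add_le _ _
      _ ≤ 2 * R0 * (K0 * ‖z - y‖) + Mf * ((L : ℝ) * ‖z - y‖) := add_le_add hfirst hsecond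
      _ = CG * ‖z - y‖ := by rw [hCGdef]; ring
  have hGlip : LipschitzWith CG.toNNReal G := by
    refine LipschitzWith.of_dist_le_mul fun x y => ?_
    rw [Real.dist_eq, dist_eq_norm, Real.coe_toNNReal _ hCG0]
    exact hGlipb y x
  have hGcont : Continuous G := hGlip.continuous
  have hGsupp : ∀ y : Fin m → ℝ, R0 < ‖y‖ → G y = 0 := by
    intro y hy
    have : ∀ t : ℝ, f (t, y) = 0 :=
      fun t => hfz _ (lt_of_lt_of_le hy (norm_snd_le ((t, y) : E)))
    simp only [hGdef]
    rw [setIntegral_congr_fun measurableSet_Ioi (fun t _ => this t)]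
    simp
  have hGc : HasCompactSupport G := by
    refine HasCompactSupport.intro (isCompact_closedBall (0 : Fin m → ℝ) R0) fun y hy => ?_
    refine hGsupp y ?_
    rw [mem_closedBall, dist_zero_right, not_le] at hy
    exact hy
  have hGint : Integrable G volume := hGcont.integrable_of_hasCompactSupport hGc
  -- the difference quotients
  set q : ℕ → (Fin m → ℝ) → ℝ :=
    fun n y => (G (y + ((n : ℝ) + 1)⁻¹ • e) - G y) * ((n : ℝ) + 1) with hqdef
  have hnpos : ∀ n : ℕ, (0 : ℝ) < ((n : ℝ) + 1)⁻¹ := fun n => by positivity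
  have hnmul : ∀ n : ℕ, ((n : ℝ) + 1)⁻¹ * ((n : ℝ) + 1) = 1 := fun n => by
    field_simp
  have hnle1 : ∀ n : ℕ, ((n : ℝ) + 1)⁻¹ ≤ 1 := by
    intro n
    rw [inv_le_one_iff₀]
    right; linarith [Nat.cast_nonneg (α := ℝ) n]
  have hq0 : ∀ n, ∫ y, q n y = 0 := by
    intro n
    simp only [hqdef]
    rw [integral_mul_const, integral_sub (hGint.comp_add_right _) hGint,
      integral_add_right_eq_self G _]
    ring
  -- the uniform bound
  set bound : (Fin m → ℝ) → ℝ :=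
    (closedBall (0 : Fin m → ℝ) (R0 + ‖e‖ + 1)).indicator (fun _ => CG * ‖e‖) with hbdef
  have hboundint : Integrable bound volume :=
    (integrable_indicator_iff measurableSet_closedBall).2
      (integrableOn_const measure_closedBall_lt_top.ne)
  have hqb : ∀ n, ∀ y : Fin m → ℝ, |q n y| ≤ bound y := by
    intro n y
    by_cases hy : ‖y‖ ≤ R0 + ‖e‖ + 1
    · have hmem : y ∈ closedBall (0 : Fin m → ℝ) (R0 + ‖e‖ + 1) := by
        rwa [mem_closedBall, dist_zero_right]
      rw [hbdef, indicator_of_mem hmem]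
      have h1 : |q n y| = |G (y + ((n : ℝ) + 1)⁻¹ • e) - G y| * ((n : ℝ) + 1) := by
        rw [hqdef, abs_mul, abs_of_pos (by positivity : (0:ℝ) < (n : ℝ) + 1)]
      have h2 : |G (y + ((n : ℝ) + 1)⁻¹ • e) - G y| ≤ CG * (((n : ℝ) + 1)⁻¹ * ‖e‖) := by
        have := hGlipb y (y + ((n : ℝ) + 1)⁻¹ • e)
        simpa [norm_smul, abs_of_pos (hnpos n),
          abs_of_pos (show (0:ℝ) < (n : ℝ) + 1 by positivity)] using this
      calc |q n y| ≤ (CG * (((n : ℝ) + 1)⁻¹ * ‖e‖)) * ((n : ℝ) + 1) := by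
            rw [h1]
            exact mul_le_mul_of_nonneg_right h2 (by positivity)
        _ = CG * ‖e‖ * (((n : ℝ) + 1)⁻¹ * ((n : ℝ) + 1)) := by ring
        _ = CG * ‖e‖ := by rw [hnmul n, mul_one]
    · push_neg at hy
      have hcnorm : ‖((n : ℝ) + 1)⁻¹ • e‖ ≤ ‖e‖ := by
        rw [norm_smul, Real.norm_eq_abs, abs_of_pos (hnpos n)]
        nlinarith [hnle1 n, norm_nonneg e, hnpos n]
      have hGy : G y = 0 := hGsupp y (by nlinarith [norm_nonneg e])
      have hGy2 : G (y + ((n : ℝ) + 1)⁻¹ • e) = 0 := by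
        refine hGsupp _ ?_
        have h7 : ‖y‖ ≤ ‖y + ((n : ℝ) + 1)⁻¹ • e‖ + ‖((n : ℝ) + 1)⁻¹ • e‖ := by
          simpa using norm_add_le (y + ((n : ℝ) + 1)⁻¹ • e) (-(((n : ℝ) + 1)⁻¹ • e))
        nlinarith [hcnorm]
      rw [hqdef]
      simp only [hGy, hGy2, sub_zero, zero_mul, sub_self, abs_zero]
      exact indicator_nonneg (fun _ _ => by positivity) y
  have hqmeas : ∀ n, AEStronglyMeasurable (q n) volume := by
    intro n
    refine Continuous.aestronglyMeasurable ?_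
    exact ((hGcont.comp (by fun_prop)).sub hGcont).mul continuous_const
  -- the limit function
  set D : (Fin m → ℝ) → ℝ := fun y =>
    (∫ t in Ioi (σ y), fderiv ℝ f (t, y) (0, e)) - f (σ y, y) * fderiv ℝ σ y e with hDdef
  -- convergence of the nhds filter for the sequence (n+1)⁻¹
  have htn : Tendsto (fun n : ℕ => ((n : ℝ) + 1)⁻¹) atTop (𝓝[≠] (0 : ℝ)) := by
    refine tendsto_nhdsWithin_of_tendsto_nhds_of_eventually_within _ ?_
      (Eventually.of_forall fun n => ?_)
    · simpa [one_div] using (tendsto_one_div_add_atTop_nhds_zero_nat :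
        Tendsto (fun n : ℕ => 1 / ((n : ℝ) + 1)) atTop (𝓝 0))
    · exact (hnpos n).ne'
  have hlim : ∀ᵐ y : Fin m → ℝ, Tendsto (fun n => q n y) atTop (𝓝 (D y)) := by
    filter_upwards [hσ.ae_differentiableAt (μ := volume)] with y hy
    -- the function Φ
    set Φ : ℝ → ℝ := fun s => ∫ t in Ioi s, f (t, y) with hΦdef
    have hΦeq : ∀ s, Φ s = Φ (σ y) - ∫ t in (σ y)..s, f (t, y) := by
      intro s
      have := Ioi_sub_Ioi (g := fun t => f (t, y)) (intSlice y) (σ y) s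
      simp only [hΦdef]
      linarith
    have hΦd : ∀ s, HasDerivAt Φ (-f (s, y)) s := by
      intro s
      have hcont : Continuous fun t : ℝ => f (t, y) := hfcont.comp (by fun_prop)
      have h1 : HasDerivAt (fun u => ∫ t in (σ y)..u, f (t, y)) (f (s, y)) s :=
        intervalIntegral.integral_hasDerivAt_right (intSlice y).intervalIntegrable
          (hcont.stronglyMeasurableAtFilter _ _) hcont.continuousAt
      have h2 := h1.const_sub (Φ (σ y))
      have h3 : Φ = fun u => Φ (σ y) - ∫ t in (σ y)..u, f (t, y) := funext hΦeq
      rw [h3]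
      exact h2
    -- derivative of the path h ↦ σ (y + h • e)
    have hpath : HasDerivAt (fun h : ℝ => σ (y + h • e)) (fderiv ℝ σ y e) 0 := by
      have hin : HasDerivAt (fun h : ℝ => y + h • e) e 0 := by
        simpa using ((hasDerivAt_id (0 : ℝ)).smul_const e).const_add y
      have h0 : y + (0 : ℝ) • e = y := by simp
      have hfd' : HasFDerivAt σ (fderiv ℝ σ y) ((fun h : ℝ => y + h • e) 0) := by
        simp only [h0]
        exact hy.hasFDerivAt
      exact hfd'.comp_hasDerivAt 0 hin
    -- derivative of ψ = Φ ∘ path at 0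
    have hψd : HasDerivAt (fun h : ℝ => Φ (σ (y + h • e)))
        (-f (σ y, y) * fderiv ℝ σ y e) 0 := by
      have h0 : (fun h : ℝ => σ (y + h • e)) 0 = σ y := by simp
      have hΦd' : HasDerivAt Φ (-f (σ y, y)) ((fun h : ℝ => σ (y + h • e)) 0) := by
        rw [h0]; exact hΦd (σ y)
      exact hΦd'.comp 0 hpath
    -- T2 convergence
    have hT2 : Tendsto (fun n : ℕ => (Φ (σ (y + ((n : ℝ) + 1)⁻¹ • e)) - Φ (σ y)) * ((n : ℝ) + 1))
        atTop (𝓝 (-f (σ y, y) * fderiv ℝ σ y e)) := by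
      have hs := (hasDerivAt_iff_tendsto_slope.1 hψd).comp htn
      refine hs.congr fun n => ?_
      have h0 : σ (y + (0 : ℝ) • e) = σ y := by simp
      simp only [Function.comp_apply, slope_def_field, h0, sub_zero]
      rw [div_eq_mul_inv, inv_inv]
    -- T1 convergence via dominated convergence
    have hbtend : Tendsto (fun n : ℕ => σ (y + ((n : ℝ) + 1)⁻¹ • e)) atTop (𝓝 (σ y)) := by
      have h1 : Tendsto (fun n : ℕ => y + ((n : ℝ) + 1)⁻¹ • e) atTop (𝓝 y) := by
        have h2 : Tendsto (fun n : ℕ => ((n : ℝ) + 1)⁻¹) atTop (𝓝 (0 : ℝ)) := by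
          simpa [one_div] using (tendsto_one_div_add_atTop_nhds_zero_nat :
        Tendsto (fun n : ℕ => 1 / ((n : ℝ) + 1)) atTop (𝓝 0))
        have h3 := (h2.smul_const e).const_add y
        simpa using h3
      exact (hσ.continuous.continuousAt).tendsto.comp h1
    have hT1 : Tendsto (fun n : ℕ =>
        (∫ t in Ioi (σ (y + ((n : ℝ) + 1)⁻¹ • e)),
          (f (t, y + ((n : ℝ) + 1)⁻¹ • e) - f (t, y))) * ((n : ℝ) + 1))
        atTop (𝓝 (∫ t in Ioi (σ y), fderiv ℝ f (t, y) (0, e))) := by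
      set u : ℕ → ℝ → ℝ := fun n t =>
        (Ioi (σ (y + ((n : ℝ) + 1)⁻¹ • e))).indicator
          (fun t => (f (t, y + ((n : ℝ) + 1)⁻¹ • e) - f (t, y)) * ((n : ℝ) + 1)) t with hudef
      have humeas : ∀ n, AEStronglyMeasurable (u n) volume := by
        intro n
        refine (Continuous.aestronglyMeasurable ?_).indicator measurableSet_Ioi
        exact ((hfcont.comp (by fun_prop)).sub (hfcont.comp (by fun_prop))).mul continuous_const
      set bnd : ℝ → ℝ := (Icc (-R0) R0).indicator (fun _ => K0 * ‖e‖) with hbnddef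
      have hbndint : Integrable bnd volume :=
        (integrable_indicator_iff measurableSet_Icc).2
          (integrableOn_const measure_Icc_lt_top.ne)
      have hdom : ∀ n, ∀ᵐ t : ℝ, ‖u n t‖ ≤ bnd t := by
        intro n
        refine Eventually.of_forall fun t => ?_
        rw [Real.norm_eq_abs]
        have hub : |(f (t, y + ((n : ℝ) + 1)⁻¹ • e) - f (t, y)) * ((n : ℝ) + 1)|
            ≤ K0 * ‖e‖ := by
          rw [abs_mul, abs_of_pos (show (0:ℝ) < (n : ℝ) + 1 by positivity)]
          have h8 := hflip t y (y + ((n : ℝ) + 1)⁻¹ • e)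
          have h9 : ‖y + ((n : ℝ) + 1)⁻¹ • e - y‖ = ((n : ℝ) + 1)⁻¹ * ‖e‖ := by
            rw [add_sub_cancel_left, norm_smul, Real.norm_eq_abs, abs_of_pos (hnpos n)]
          rw [h9] at h8
          calc |f (t, y + ((n : ℝ) + 1)⁻¹ • e) - f (t, y)| * ((n : ℝ) + 1)
              ≤ K0 * (((n : ℝ) + 1)⁻¹ * ‖e‖) * ((n : ℝ) + 1) :=
                mul_le_mul_of_nonneg_right h8 (by positivity)
            _ = K0 * ‖e‖ * (((n : ℝ) + 1)⁻¹ * ((n : ℝ) + 1)) := by ring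
            _ = K0 * ‖e‖ := by rw [hnmul n, mul_one]
        by_cases ht : |t| ≤ R0
        · have htm : t ∈ Icc (-R0) R0 := abs_le.1 ht
          rw [hbnddef, indicator_of_mem htm]
          refine le_trans ?_ hub
          simp only [hudef]
          by_cases hmem : t ∈ Ioi (σ (y + ((n : ℝ) + 1)⁻¹ • e))
          · rw [indicator_of_mem hmem]
          · rw [indicator_of_notMem hmem, abs_zero]
            exact abs_nonneg _
        · push_neg at ht
          have h1 : f (t, y + ((n : ℝ) + 1)⁻¹ • e) = 0 :=
            hfz _ (lt_of_lt_of_le ht (norm_fst_le ((t, y + ((n : ℝ) + 1)⁻¹ • e) : E)))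
          have h2 : f (t, y) = 0 :=
            hfz _ (lt_of_lt_of_le ht (norm_fst_le ((t, y) : E)))
          have hu0 : u n t = 0 := by
            simp only [hudef]
            by_cases hmem : t ∈ Ioi (σ (y + ((n : ℝ) + 1)⁻¹ • e))
            · rw [indicator_of_mem hmem, h1, h2]; ring
            · rw [indicator_of_notMem hmem]
          rw [hu0, abs_zero]
          exact indicator_nonneg (fun _ _ => by positivity) t
      have hae : ∀ᵐ t : ℝ, t ≠ σ y := by
        have h1 : (volume : Measure ℝ) {σ y} = 0 := measure_singleton _
        rw [ae_iff]
        convert h1 using 2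
        ext t
        simp
      have hptw : ∀ᵐ t : ℝ, Tendsto (fun n => u n t) atTop
          (𝓝 ((Ioi (σ y)).indicator (fun t => fderiv ℝ f (t, y) (0, e)) t)) := by
        filter_upwards [hae] with t ht
        rcases lt_or_gt_of_ne ht with hlt | hgt
        · have hev : ∀ᶠ n : ℕ in atTop, t < σ (y + ((n : ℝ) + 1)⁻¹ • e) :=
            hbtend.eventually (eventually_gt_nhds hlt)
          rw [indicator_of_notMem (by simpa using hlt.not_gt : t ∉ Ioi (σ y))]
          refine Tendsto.congr' ?_ tendsto_const_nhds
          filter_upwards [hev] with n hn'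
          simp only [hudef]
          exact (indicator_of_notMem (by simpa using hn'.not_gt) _).symm
        · have hev : ∀ᶠ n : ℕ in atTop, σ (y + ((n : ℝ) + 1)⁻¹ • e) < t :=
            hbtend.eventually (eventually_lt_nhds hgt)
          rw [indicator_of_mem (by simpa using hgt : t ∈ Ioi (σ y))]
          have hθ : HasDerivAt (fun h : ℝ => f (t, y + h • e)) (fderiv ℝ f (t, y) (0, e)) 0 := by
            have := hasDerivAt_slice2 hf t y e 0
            simpa using this
          have hs := (hasDerivAt_iff_tendsto_slope.1 hθ).comp htn
          refine Tendsto.congr' ?_ hs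
          filter_upwards [hev] with n hn'
          simp only [hudef, Function.comp_apply, slope_def_field]
          rw [indicator_of_mem (by simpa using hn')]
          have h0 : y + (0 : ℝ) • e = y := by simp
          rw [h0, sub_zero, div_eq_mul_inv, inv_inv]
      have hdct := tendsto_integral_of_dominated_convergence bnd humeas hbndint hdom hptw
      rw [integral_indicator measurableSet_Ioi] at hdct
      refine Tendsto.congr (fun n => ?_) hdct
      simp only [hudef]
      rw [integral_indicator measurableSet_Ioi, integral_mul_const]
    -- combine T1 and T2
    have hsplit : ∀ n : ℕ, q n y =
        (∫ t in Ioi (σ (y + ((n : ℝ) + 1)⁻¹ • e)),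
          (f (t, y + ((n : ℝ) + 1)⁻¹ • e) - f (t, y))) * ((n : ℝ) + 1)
        + (Φ (σ (y + ((n : ℝ) + 1)⁻¹ • e)) - Φ (σ y)) * ((n : ℝ) + 1) := by
      intro n
      have h2 : (∫ t in Ioi (σ (y + ((n : ℝ) + 1)⁻¹ • e)),
          (f (t, y + ((n : ℝ) + 1)⁻¹ • e) - f (t, y)))
          = (∫ t in Ioi (σ (y + ((n : ℝ) + 1)⁻¹ • e)), f (t, y + ((n : ℝ) + 1)⁻¹ • e))
            - ∫ t in Ioi (σ (y + ((n : ℝ) + 1)⁻¹ • e)), f (t, y) :=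
        integral_sub (intSlice _).integrableOn (intSlice y).integrableOn
      simp only [hqdef, hΦdef, hGdef]
      rw [h2]
      ring
    have hfinal := (hT1.add hT2).congr (fun n => (hsplit n).symm)
    have hDval : D y = (∫ t in Ioi (σ y), fderiv ℝ f (t, y) (0, e))
        + -f (σ y, y) * fderiv ℝ σ y e := by
      rw [hDdef]; ring
    rw [hDval]
    exact hfinal
  -- main dominated convergence
  have hmain := tendsto_integral_of_dominated_convergence bound hqmeas hboundint
    (fun n => Eventually.of_forall fun y => by
      rw [Real.norm_eq_abs]; exact hqb n y) hlim
  have hD0 : ∫ y, D y = 0 := by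
    have h0 : Tendsto (fun _ : ℕ => (0 : ℝ)) atTop (𝓝 (∫ y, D y)) := by
      refine Tendsto.congr (fun n => ?_) hmain
      exact hq0 n
    exact tendsto_nhds_unique h0 tendsto_const_nhds
  -- finish
  have hBmeas : AEStronglyMeasurable (fun y : Fin m → ℝ => f (σ y, y) * fderiv ℝ σ y e)
      volume := by
    refine AEStronglyMeasurable.mul ?_ ?_
    · exact (hfcont.comp ((hσ.continuous).prodMk continuous_id)).aestronglyMeasurable
    · exact (measurable_fderiv_apply_const ℝ σ e).aestronglyMeasurable
  have hBint : Integrable (fun y : Fin m → ℝ => f (σ y, y) * fderiv ℝ σ y e) volume := by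
    refine Integrable.mono' ((integrable_indicator_iff measurableSet_closedBall).2
      (integrableOn_const measure_closedBall_lt_top.ne)
        : Integrable ((closedBall (0 : Fin m → ℝ) R0).indicator
          (fun _ => Mf * ((L : ℝ) * ‖e‖))) volume) hBmeas ?_
    refine Eventually.of_forall fun y => ?_
    by_cases hy : ‖y‖ ≤ R0
    · have hmem : y ∈ closedBall (0 : Fin m → ℝ) R0 := by
        rwa [mem_closedBall, dist_zero_right]
      rw [indicator_of_mem hmem, Real.norm_eq_abs, abs_mul]
      have h1 : |f (σ y, y)| ≤ Mf := hMf _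
      have h2 : |fderiv ℝ σ y e| ≤ (L : ℝ) * ‖e‖ := by
        calc |fderiv ℝ σ y e| ≤ ‖fderiv ℝ σ y‖ * ‖e‖ := (fderiv ℝ σ y).le_opNorm e
          _ ≤ (L : ℝ) * ‖e‖ :=
            mul_le_mul_of_nonneg_right (norm_fderiv_le_of_lipschitz ℝ hσ) (norm_nonneg e)
      exact mul_le_mul h1 h2 (abs_nonneg _) hMf0
    · push_neg at hy
      have h1 : f (σ y, y) = 0 := by
        refine hfz _ (lt_of_lt_of_le hy ?_)
        exact norm_snd_le ((σ y, y) : E)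
      rw [h1, zero_mul, norm_zero]
      exact indicator_nonneg (fun _ _ => by positivity) y
  have hDint : Integrable D volume := by
    refine Integrable.mono' hboundint
      (aestronglyMeasurable_of_tendsto_ae atTop hqmeas hlim) ?_
    filter_upwards [hlim] with y hy
    rw [Real.norm_eq_abs]
    refine le_of_tendsto hy.abs (Eventually.of_forall fun n => ?_)
    exact hqb n y
  have hAeq : (fun y : Fin m → ℝ => ∫ t in Ioi (σ y), fderiv ℝ f (t, y) (0, e))
      = fun y => D y + f (σ y, y) * fderiv ℝ σ y e := by
    funext y
    rw [hDdef]
    ring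
  rw [hAeq, integral_add hDint hBint, hD0, zero_add]

lemma B_integrable {σ : (Fin m → ℝ) → ℝ} {L : NNReal} (hσ : LipschitzWith L σ)
    {f : E → ℝ} (hfcont : Continuous f) (hfc : HasCompactSupport f)
    (e : Fin m → ℝ) :
    Integrable (fun y : Fin m → ℝ => f (σ y, y) * fderiv ℝ σ y e) volume := by
  obtain ⟨R, hRb⟩ := hfc.isBounded.subset_closedBall 0
  set R0 : ℝ := max R 0 with hR0def
  have hR0 : 0 ≤ R0 := le_max_right _ _
  have hfz : ∀ z : E, R0 < ‖z‖ → f z = 0 := by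
    intro z hz
    refine image_eq_zero_of_notMem_tsupport fun hmem => ?_
    have := hRb hmem
    rw [mem_closedBall, dist_zero_right] at this
    have : ‖z‖ ≤ R0 := le_trans this (le_max_left _ _)
    linarith
  obtain ⟨Mb, hMb⟩ := hfc.exists_bound_of_continuous hfcont
  set Mf : ℝ := max Mb 0 with hMfdef
  have hMf0 : 0 ≤ Mf := le_max_right _ _
  have hMf : ∀ z : E, |f z| ≤ Mf := fun z => le_trans (by simpa using hMb z) (le_max_left _ _)
  have hBmeas : AEStronglyMeasurable (fun y : Fin m → ℝ => f (σ y, y) * fderiv ℝ σ y e)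
      volume := by
    refine AEStronglyMeasurable.mul ?_ ?_
    · exact (hfcont.comp ((hσ.continuous).prodMk continuous_id)).aestronglyMeasurable
    · exact (measurable_fderiv_apply_const ℝ σ e).aestronglyMeasurable
  refine Integrable.mono' ((integrable_indicator_iff measurableSet_closedBall).2
    (integrableOn_const measure_closedBall_lt_top.ne)
      : Integrable ((closedBall (0 : Fin m → ℝ) R0).indicator
        (fun _ => Mf * ((L : ℝ) * ‖e‖))) volume) hBmeas ?_
  refine Eventually.of_forall fun y => ?_
  by_cases hy : ‖y‖ ≤ R0
  · have hmem : y ∈ closedBall (0 : Fin m → ℝ) R0 := by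
      rwa [mem_closedBall, dist_zero_right]
    rw [indicator_of_mem hmem, Real.norm_eq_abs, abs_mul]
    have h1 : |f (σ y, y)| ≤ Mf := hMf _
    have h2 : |fderiv ℝ σ y e| ≤ (L : ℝ) * ‖e‖ := by
      calc |fderiv ℝ σ y e| ≤ ‖fderiv ℝ σ y‖ * ‖e‖ := (fderiv ℝ σ y).le_opNorm e
        _ ≤ (L : ℝ) * ‖e‖ :=
          mul_le_mul_of_nonneg_right (norm_fderiv_le_of_lipschitz ℝ hσ) (norm_nonneg e)
    exact mul_le_mul h1 h2 (abs_nonneg _) hMf0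
  · push_neg at hy
    have h1 : f (σ y, y) = 0 := by
      refine hfz _ (lt_of_lt_of_le hy ?_)
      exact norm_snd_le ((σ y, y) : E)
    rw [h1, zero_mul, norm_zero]
    exact indicator_nonneg (fun _ _ => by positivity) y

lemma key_div {σ : (Fin m → ℝ) → ℝ} {L : NNReal} (hσ : LipschitzWith L σ)
    {F : E → E} (hF : ContDiff ℝ 1 F) (hFc : HasCompactSupport F) :
    ∫ x in {x : E | σ x.2 < x.1},
        ((fderiv ℝ F x ((1 : ℝ), (0 : Fin m → ℝ))).1
          + ∑ ν, (fderiv ℝ F x ((0 : ℝ), Pi.single ν 1)).2 ν)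
      = ∫ y, (-(F (σ y, y)).1
          + ∑ ν, (F (σ y, y)).2 ν * fderiv ℝ σ y (Pi.single ν 1)) := by
  have hFd : Differentiable ℝ F := hF.differentiable one_ne_zero
  -- the scalar components
  set f1 : E → ℝ := fun z => (F z).1 with hf1def
  set f2 : Fin m → E → ℝ := fun ν z => (F z).2 ν with hf2def
  have hf1 : ContDiff ℝ 1 f1 := contDiff_fst.comp hF
  have hf2 : ∀ ν, ContDiff ℝ 1 (f2 ν) := fun ν =>
    (ContinuousLinearMap.proj (R := ℝ) (φ := fun _ : Fin m => ℝ) ν).contDiff.comp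
      (contDiff_snd.comp hF)
  have hf1c : HasCompactSupport f1 := hFc.comp_left (g := Prod.fst) rfl
  have hf2c : ∀ ν, HasCompactSupport (f2 ν) := fun ν =>
    (hFc.comp_left (g := Prod.snd) rfl).comp_left (g := fun v : Fin m → ℝ => v ν) rfl
  -- derivative identities
  have hd1 : ∀ (z : E) (v : E), fderiv ℝ f1 z v = (fderiv ℝ F z v).1 := by
    intro z v
    have h : HasFDerivAt f1
        ((ContinuousLinearMap.fst ℝ ℝ (Fin m → ℝ)).comp (fderiv ℝ F z)) z :=
      (ContinuousLinearMap.fst ℝ ℝ (Fin m → ℝ)).hasFDerivAt.comp z (hFd z).hasFDerivAt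
    rw [h.fderiv]
    rfl
  have hd2 : ∀ (ν : Fin m) (z : E) (v : E),
      fderiv ℝ (f2 ν) z v = (fderiv ℝ F z v).2 ν := by
    intro ν z v
    have h : HasFDerivAt (f2 ν)
        (((ContinuousLinearMap.proj (R := ℝ) (φ := fun _ : Fin m => ℝ) ν).comp
          (ContinuousLinearMap.snd ℝ ℝ (Fin m → ℝ))).comp (fderiv ℝ F z)) z :=
      ((ContinuousLinearMap.proj (R := ℝ) (φ := fun _ : Fin m => ℝ) ν).comp
          (ContinuousLinearMap.snd ℝ ℝ (Fin m → ℝ))).hasFDerivAt.comp z (hFd z).hasFDerivAt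
    rw [h.fderiv]
    rfl
  -- continuity / support of derivative integrands
  have hg1cont : Continuous fun x : E => fderiv ℝ f1 x ((1 : ℝ), (0 : Fin m → ℝ)) :=
    (hf1.continuous_fderiv one_ne_zero).clm_apply continuous_const
  have hg1c : HasCompactSupport fun x : E => fderiv ℝ f1 x ((1 : ℝ), (0 : Fin m → ℝ)) :=
    (hf1c.fderiv ℝ).comp_left (g := fun A : E →L[ℝ] ℝ => A ((1 : ℝ), (0 : Fin m → ℝ))) rfl
  have hg2cont : ∀ ν, Continuous fun x : E => fderiv ℝ (f2 ν) x ((0 : ℝ), Pi.single ν 1) :=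
    fun ν => ((hf2 ν).continuous_fderiv one_ne_zero).clm_apply continuous_const
  have hg2c : ∀ ν, HasCompactSupport fun x : E => fderiv ℝ (f2 ν) x ((0 : ℝ), Pi.single ν 1) :=
    fun ν => ((hf2c ν).fderiv ℝ).comp_left
      (g := fun A : E →L[ℝ] ℝ => A ((0 : ℝ), Pi.single ν 1)) rfl
  have hΩ : MeasurableSet {x : E | σ x.2 < x.1} :=
    (isOpen_lt ((hσ.continuous).comp continuous_snd) continuous_fst).measurableSet
  -- rewrite the integrand
  have hrw : ∀ x : E, (fderiv ℝ F x ((1 : ℝ), (0 : Fin m → ℝ))).1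
      + ∑ ν, (fderiv ℝ F x ((0 : ℝ), Pi.single ν 1)).2 ν
      = fderiv ℝ f1 x ((1 : ℝ), (0 : Fin m → ℝ))
        + ∑ ν, fderiv ℝ (f2 ν) x ((0 : ℝ), Pi.single ν 1) := by
    intro x
    rw [hd1]
    congr 1
    exact Finset.sum_congr rfl fun ν _ => (hd2 ν x _).symm
  rw [setIntegral_congr_fun hΩ fun x _ => hrw x]
  -- split the integral
  rw [integral_add ((hg1cont.integrable_of_hasCompactSupport hg1c).integrableOn)
    ((integrable_finset_sum _ fun ν _ =>
      (hg2cont ν).integrable_of_hasCompactSupport (hg2c ν)).integrableOn),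
    integral_finset_sum _ (fun ν _ =>
      ((hg2cont ν).integrable_of_hasCompactSupport (hg2c ν)).integrableOn)]
  -- apply Fubini and the one-dimensional results
  have h1 : ∫ x in {x : E | σ x.2 < x.1}, fderiv ℝ f1 x ((1 : ℝ), (0 : Fin m → ℝ))
      = ∫ y, -f1 (σ y, y) := by
    rw [fubini_epigraph hσ.continuous hg1cont hg1c]
    exact integral_congr_ae (Eventually.of_forall fun y => ftc_slice hf1 hf1c (σ y) y)
  have h2 : ∀ ν, ∫ x in {x : E | σ x.2 < x.1}, fderiv ℝ (f2 ν) x ((0 : ℝ), Pi.single ν 1)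
      = ∫ y, f2 ν (σ y, y) * fderiv ℝ σ y (Pi.single ν 1) := by
    intro ν
    rw [fubini_epigraph hσ.continuous (hg2cont ν) (hg2c ν)]
    exact key_nu hσ (hf2 ν) (hf2c ν) (Pi.single ν 1)
  rw [h1]
  rw [Finset.sum_congr rfl fun ν _ => h2 ν]
  -- reassemble
  have hint1 : Integrable (fun y : Fin m → ℝ => -f1 (σ y, y)) volume := by
    have : Continuous fun y : Fin m → ℝ => f1 (σ y, y) :=
      (hf1.continuous).comp ((hσ.continuous).prodMk continuous_id)
    have hsupp : HasCompactSupport fun y : Fin m → ℝ => f1 (σ y, y) := by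
      obtain ⟨R, hRb⟩ := hf1c.isBounded.subset_closedBall 0
      refine HasCompactSupport.intro (isCompact_closedBall (0 : Fin m → ℝ) (max R 0))
        fun y hy => ?_
      rw [mem_closedBall, dist_zero_right, not_le] at hy
      refine image_eq_zero_of_notMem_tsupport fun hmem => ?_
      have h5 := hRb hmem
      rw [mem_closedBall, dist_zero_right] at h5
      have h6 : ‖y‖ ≤ ‖((σ y, y) : E)‖ := norm_snd_le ((σ y, y) : E)
      have : ‖y‖ ≤ max R 0 := le_trans h6 (le_trans h5 (le_max_left _ _))
      linarith
    exact ((this.integrable_of_hasCompactSupport hsupp)).neg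
  rw [← integral_finset_sum _ (fun ν _ =>
    B_integrable hσ (hf2 ν).continuous (hf2c ν) (Pi.single ν 1)),
    ← integral_add hint1 (integrable_finset_sum _ fun ν _ =>
      B_integrable hσ (hf2 ν).continuous (hf2c ν) (Pi.single ν 1))]

end Key

/-- If `X` is a `C¹` vector field on `ℝ × ℝ^{N-1}` that is a.e. tangent to the graph
boundary of the special Lipschitz domain `ω = {x₁ > σ(x')}`, then `Σ_ν X^ν D_ν 1_ω = 0`
as a distribution; i.e. `∫_ω div(φ·X) = 0` for every test function `φ`. -/
theorem stmt_4 (N : ℕ) (hN : 1 ≤ N)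
    (σ : (Fin (N - 1) → ℝ) → ℝ) (L : NNReal) (hL : (L : ℝ) < 1)
    (hσ : LipschitzWith L σ)
    (X : (ℝ × (Fin (N - 1) → ℝ)) → ℝ × (Fin (N - 1) → ℝ)) (hX : ContDiff ℝ 1 X)
    (ω : Set (ℝ × (Fin (N - 1) → ℝ))) (hω : ω = {x | σ x.2 < x.1})
    (htan : ∀ᵐ x' ∂(volume : Measure (Fin (N - 1) → ℝ)),
      (X (σ x', x')).1 = ∑ ν, (X (σ x', x')).2 ν * fderiv ℝ σ x' (Pi.single ν 1)) :
    ∀ φ : (ℝ × (Fin (N - 1) → ℝ)) → ℝ, ContDiff ℝ (⊤ : ℕ∞) φ → HasCompactSupport φ →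
      (∫ x in ω,
        ((fderiv ℝ (fun y => φ y • X y) x ((1 : ℝ), (0 : Fin (N - 1) → ℝ))).1 +
          ∑ ν, (fderiv ℝ (fun y => φ y • X y) x ((0 : ℝ), Pi.single ν 1)).2 ν)) = 0 := by
  intro φ hφ hφc
  subst hω
  have hF : ContDiff ℝ 1 fun y => φ y • X y := (hφ.of_le (by simp)).smul hX
  have hFc : HasCompactSupport fun y => φ y • X y := hφc.smul_right
  rw [key_div hσ hF hFc]
  have hzero : ∀ᵐ y ∂(volume : Measure (Fin (N - 1) → ℝ)),
      (-(φ (σ y, y) • X (σ y, y)).1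
        + ∑ ν, (φ (σ y, y) • X (σ y, y)).2 ν * fderiv ℝ σ y (Pi.single ν 1)) = 0 := by
    filter_upwards [htan] with y hy
    have h1 : (φ (σ y, y) • X (σ y, y)).1 = φ (σ y, y) * (X (σ y, y)).1 := rfl
    have h2 : ∀ ν, (φ (σ y, y) • X (σ y, y)).2 ν = φ (σ y, y) * (X (σ y, y)).2 ν :=
      fun ν => rfl
    rw [h1, hy]
    simp only [h2]
    have h3 : ∑ ν, φ (σ y, y) * (X (σ y, y)).2 ν * fderiv ℝ σ y (Pi.single ν 1)
        = φ (σ y, y) * ∑ ν, (X (σ y, y)).2 ν * fderiv ℝ σ y (Pi.single ν 1) := by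
      rw [Finset.mul_sum]
      exact Finset.sum_congr rfl fun ν _ => mul_assoc _ _ _
    rw [h3]
    ring
  rw [integral_congr_ae hzero, integral_zero]
end

section
/- Let ψ ∈ 𝒮(ℝ^N) have all moments vanishing (∫ x^γ ψ(x) dx = 0 for all multi-indices γ), let α be a multi-index, and let g ∈ C^∞(ℝ^N) be bounded with all derivatives bounded. Define ψ_k(x) := 2^{(k−1)N}ψ(2^{(k−1)}x) for k ≥ 1. Then for every 1 ≤ p ≤ ∞ and f ∈ L^p(ℝ^N), the commutator satisfies ‖g·(D^α ψ_k ∗ f) − D^α ψ_k ∗ (g f)‖_{L^p(ℝ^N)} ≤ C · 2^{k(|α|−1)} ‖f‖_{L^p(ℝ^N)}, with C independent of k, p, and f. -/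
open MeasureTheory ENNReal

section Aux
variable {N : ℕ}
local notation "G" => EuclideanSpace ℝ (Fin N)

private lemma sub_left_lintegral' (H : G → ℝ≥0∞) (hH : Measurable H) (x : G) :
    ∫⁻ y, H (x - y) = ∫⁻ z, H z :=
  (Measure.measurePreserving_sub_left volume x).lintegral_comp hH

private lemma conv_lintegral' (H F : G → ℝ≥0∞) (hH : Measurable H) (hF : Measurable F) :
    ∫⁻ x, ∫⁻ y, H (x - y) * F y = (∫⁻ z, H z) * ∫⁻ y, F y := by
  rw [lintegral_lintegral_swap]
  · have : ∀ y : G, ∫⁻ x, H (x - y) * F y = (∫⁻ z, H z) * F y := by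
      intro y
      rw [lintegral_mul_const _ (show Measurable fun x : G => H (x - y) by fun_prop),
        lintegral_sub_right_eq_self H y]
    simp_rw [this]
    rw [lintegral_const_mul _ hF]
  · exact ((hH.comp (measurable_fst.sub measurable_snd)).mul
      (hF.comp measurable_snd)).aemeasurable

private lemma young_top' (H F : G → ℝ≥0∞) (hH : Measurable H) (x : G) :
    ∫⁻ y, H (x - y) * F y ≤ (∫⁻ z, H z) * essSup F volume := by
  calc ∫⁻ y, H (x - y) * F y ≤ ∫⁻ y, H (x - y) * essSup F volume := by
        refine lintegral_mono_ae ?_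
        filter_upwards [ae_le_essSup F] with y hy using mul_le_mul_right hy _
    _ = (∫⁻ z, H z) * essSup F volume := by
        rw [lintegral_mul_const _ (show Measurable fun y : G => H (x - y) by fun_prop),
          sub_left_lintegral' H hH x]

private lemma young_fin' (H F : G → ℝ≥0∞) (hH : Measurable H) (hF : Measurable F)
    (hHfin : ∫⁻ z, H z ≠ ∞) {pr : ℝ} (hpr : 1 ≤ pr) :
    (∫⁻ x, (∫⁻ y, H (x - y) * F y) ^ pr) ^ (1 / pr) ≤
      (∫⁻ z, H z) * (∫⁻ y, F y ^ pr) ^ (1 / pr) := by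
  set B := ∫⁻ z, H z with hB
  rcases eq_or_lt_of_le hpr with hpr1 | hpr1
  · simp only [← hpr1, ENNReal.rpow_one, one_div, inv_one]
    exact le_of_eq (conv_lintegral' H F hH hF)
  have hq : (pr.conjExponent).HolderConjugate pr := (Real.HolderConjugate.conjExponent hpr1).symm
  set q := pr.conjExponent with hqdef
  have hprpos : (0:ℝ) < pr := lt_trans one_pos hpr1
  have hqpos : (0:ℝ) < q := hq.pos
  have key : ∀ x : G, (∫⁻ y, H (x - y) * F y) ≤
      B ^ (1/q) * (∫⁻ y, H (x - y) * F y ^ pr) ^ (1/pr) := by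
    intro x
    have h1 : ∀ y : G, H (x - y) * F y =
        ((fun y => H (x - y) ^ (1/q)) * fun y => H (x - y) ^ (1/pr) * F y) y := by
      intro y
      simp only [Pi.mul_apply]
      rw [← mul_assoc, one_div, one_div,
        ← ENNReal.rpow_add_of_nonneg _ _ (inv_nonneg.mpr hqpos.le) (inv_nonneg.mpr hprpos.le),
        hq.inv_add_inv_eq_one, ENNReal.rpow_one]
    calc (∫⁻ y, H (x - y) * F y)
        = ∫⁻ y, ((fun y => H (x - y) ^ (1/q)) * fun y => H (x - y) ^ (1/pr) * F y) y := by
          simp_rw [← h1]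
      _ ≤ (∫⁻ y, (H (x - y) ^ (1/q)) ^ q) ^ (1/q) *
            (∫⁻ y, (H (x - y) ^ (1/pr) * F y) ^ pr) ^ (1/pr) := by
          refine ENNReal.lintegral_mul_le_Lp_mul_Lq volume hq ?_ ?_
          · exact ((hH.comp (by fun_prop : Measurable fun y : G => x - y)).pow_const _).aemeasurable
          · exact (((hH.comp (by fun_prop : Measurable fun y : G => x - y)).pow_const _).mul
              hF).aemeasurable
      _ = B ^ (1/q) * (∫⁻ y, H (x - y) * F y ^ pr) ^ (1/pr) := by
          congr 1
          · congr 1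
            have : ∀ y : G, (H (x - y) ^ (1/q)) ^ q = H (x - y) := by
              intro y
              rw [← ENNReal.rpow_mul, one_div, inv_mul_cancel₀ hqpos.ne', ENNReal.rpow_one]
            simp_rw [this]
            exact sub_left_lintegral' H hH x
          · congr 1
            refine lintegral_congr fun y => ?_
            rw [ENNReal.mul_rpow_of_nonneg _ _ hprpos.le, ← ENNReal.rpow_mul, one_div,
              inv_mul_cancel₀ hprpos.ne', ENNReal.rpow_one]
  calc (∫⁻ x, (∫⁻ y, H (x - y) * F y) ^ pr) ^ (1/pr)
      ≤ (∫⁻ x, (B ^ (1/q) * (∫⁻ y, H (x - y) * F y ^ pr) ^ (1/pr)) ^ pr) ^ (1/pr) := by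
        refine ENNReal.rpow_le_rpow (lintegral_mono fun x => ?_) (by positivity)
        exact ENNReal.rpow_le_rpow (key x) hprpos.le
    _ = ((B ^ (1/q)) ^ pr * ∫⁻ x, ∫⁻ y, H (x - y) * F y ^ pr) ^ (1/pr) := by
        congr 1
        simp_rw [ENNReal.mul_rpow_of_nonneg _ _ hprpos.le]
        rw [lintegral_const_mul' _ _ (by
          exact ENNReal.rpow_ne_top_of_nonneg (by positivity)
            (ENNReal.rpow_ne_top_of_nonneg (by positivity) hHfin))]
        congr 1
        refine lintegral_congr fun x => ?_
        rw [← ENNReal.rpow_mul, one_div, inv_mul_cancel₀ hprpos.ne', ENNReal.rpow_one]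
    _ = ((B ^ (1/q)) ^ pr * (B * ∫⁻ y, F y ^ pr)) ^ (1/pr) := by
        rw [conv_lintegral' H (fun y => F y ^ pr) hH (hF.pow_const _)]
    _ = B * (∫⁻ y, F y ^ pr) ^ (1/pr) := by
        have h2 : (((B ^ (1/q)) ^ pr) ^ (1/pr) : ℝ≥0∞) = B ^ (1/q) := by
          rw [← ENNReal.rpow_mul, ← ENNReal.rpow_mul]
          congr 1
          field_simp
        have h3 : B ^ (1/q) * B ^ (1/pr) = B := by
          rw [one_div, one_div,
            ← ENNReal.rpow_add_of_nonneg _ _ (inv_nonneg.mpr hqpos.le) (inv_nonneg.mpr hprpos.le),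
            hq.inv_add_inv_eq_one, ENNReal.rpow_one]
        rw [ENNReal.mul_rpow_of_nonneg _ _ (by positivity),
          ENNReal.mul_rpow_of_nonneg _ _ (by positivity), ← mul_assoc, h2, h3]

private lemma memLp_decay' (Φ : G → ℝ) (hΦc : Continuous Φ) (C : ℝ) (hC : 0 ≤ C)
    (hbd : ∀ w : G, |Φ w| ≤ C * (1 + ‖w‖) ^ (-((N : ℝ) + 1))) (q : ℝ≥0∞) (hq : 1 ≤ q) :
    MemLp Φ q volume := by
  have hfr : (Module.finrank ℝ (EuclideanSpace ℝ (Fin N)) : ℝ) = N := by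
    rw [finrank_euclideanSpace_fin]
  rcases eq_or_ne q ∞ with rfl | hqt
  · refine memLp_top_of_bound hΦc.aestronglyMeasurable C (ae_of_all _ fun w => ?_)
    calc ‖Φ w‖ ≤ C * (1 + ‖w‖) ^ (-((N : ℝ) + 1)) := hbd w
      _ ≤ C * 1 := by
          refine mul_le_mul_of_nonneg_left ?_ hC
          exact Real.rpow_le_one_of_one_le_of_nonpos (by linarith [norm_nonneg w])
            (by simp only [neg_nonpos]; positivity)
      _ = C := mul_one C
  · have hq0 : q ≠ 0 := by positivity
    refine ⟨hΦc.aestronglyMeasurable, ?_⟩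
    rw [eLpNorm_eq_lintegral_rpow_enorm_toReal hq0 hqt]
    have hqr : (1 : ℝ) ≤ q.toReal := by
      have := ENNReal.toReal_mono hqt hq
      simpa using this
    have hqrpos : (0:ℝ) < q.toReal := lt_of_lt_of_le one_pos hqr
    refine ENNReal.rpow_lt_top_of_nonneg (by positivity) (ne_of_lt ?_)
    have hbd2 : ∀ w : G, (‖Φ w‖₊ : ℝ≥0∞) ^ q.toReal ≤
        ENNReal.ofReal (C ^ q.toReal) *
          ENNReal.ofReal ((1 + ‖w‖) ^ (-(((N : ℝ) + 1) * q.toReal))) := by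
      intro w
      rw [← ENNReal.ofReal_mul (by positivity)]
      have h1 : (‖Φ w‖₊ : ℝ≥0∞) = ENNReal.ofReal |Φ w| := by
        rw [← enorm_eq_nnnorm, Real.enorm_eq_ofReal_abs]
      rw [h1, ENNReal.ofReal_rpow_of_nonneg (abs_nonneg _) hqrpos.le]
      refine ENNReal.ofReal_le_ofReal ?_
      calc |Φ w| ^ q.toReal ≤ (C * (1 + ‖w‖) ^ (-((N : ℝ) + 1))) ^ q.toReal := by
            refine Real.rpow_le_rpow (abs_nonneg _) (hbd w) hqrpos.le
        _ = C ^ q.toReal * (1 + ‖w‖) ^ (-(((N : ℝ) + 1) * q.toReal)) := by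
            rw [Real.mul_rpow hC (by positivity), ← Real.rpow_mul (by positivity)]
            ring_nf
    calc ∫⁻ w, (‖Φ w‖₊ : ℝ≥0∞) ^ q.toReal ≤
        ∫⁻ w : G, ENNReal.ofReal (C ^ q.toReal) *
          ENNReal.ofReal ((1 + ‖w‖) ^ (-(((N : ℝ) + 1) * q.toReal))) := lintegral_mono hbd2
      _ = ENNReal.ofReal (C ^ q.toReal) *
          ∫⁻ w : G, ENNReal.ofReal ((1 + ‖w‖) ^ (-(((N : ℝ) + 1) * q.toReal))) := by
          rw [lintegral_const_mul' _ _ ENNReal.ofReal_ne_top]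
      _ < ∞ := by
          refine ENNReal.mul_lt_top ENNReal.ofReal_lt_top ?_
          refine finite_integral_one_add_norm ?_
          rw [hfr]
          have h1N : (0:ℝ) ≤ N := Nat.cast_nonneg N
          calc (N : ℝ) < (N : ℝ) + 1 := by linarith
            _ ≤ ((N : ℝ) + 1) * q.toReal := by nlinarith
end Aux

/-- Commutator estimate: if `ψ` is Schwartz with all vanishing moments, `D^α ψ` its
multi-index derivative (realized as `iteratedFDeriv` applied to a list of basis vectors
with multiplicities `α`), `g` bounded smooth with bounded derivatives, and
`K_k(x) := 2^{(k-1)(N+|α|)} (D^α ψ)(2^{k-1} x)` (the kernel `D^α ψ_k`), then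
`‖g·(K_k ∗ f) − K_k ∗ (g f)‖_{L^p} ≤ C · 2^{k(|α|−1)} ‖f‖_{L^p}` uniformly in `k, p, f`. -/
theorem stmt_10 (N : ℕ) (hN : 1 ≤ N) (ψ : SchwartzMap (EuclideanSpace ℝ (Fin N)) ℝ)
    (hmom : ∀ γ : Fin N → ℕ,
      (∫ x : EuclideanSpace ℝ (Fin N), (∏ i, x i ^ γ i) * ψ x) = 0)
    (α : Fin N → ℕ) (a : ℕ) (ha : a = ∑ i, α i)
    (mvec : Fin a → EuclideanSpace ℝ (Fin N))
    (hmvec : ∀ i : Fin N,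
      Nat.card {l : Fin a // mvec l = EuclideanSpace.single i (1 : ℝ)} = α i)
    (g : EuclideanSpace ℝ (Fin N) → ℝ) (hg : ContDiff ℝ (⊤ : ℕ∞) g)
    (hgb : ∀ k : ℕ, ∃ B : ℝ, ∀ x, ‖iteratedFDeriv ℝ k g x‖ ≤ B) :
    ∃ C > (0 : ℝ), ∀ (k : ℕ), 1 ≤ k → ∀ (p : ℝ≥0∞), 1 ≤ p →
      ∀ f : EuclideanSpace ℝ (Fin N) → ℝ, MemLp f p volume →
      eLpNorm
        (fun x =>
          g x * (∫ y, (2 ^ (((k : ℝ) - 1) * ((N : ℝ) + a)) *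
              iteratedFDeriv ℝ a (⇑ψ) ((2 : ℝ) ^ ((k : ℝ) - 1) • (x - y)) mvec) * f y) -
          ∫ y, (2 ^ (((k : ℝ) - 1) * ((N : ℝ) + a)) *
              iteratedFDeriv ℝ a (⇑ψ) ((2 : ℝ) ^ ((k : ℝ) - 1) • (x - y)) mvec) * (g y * f y))
        p volume ≤
        ENNReal.ofReal (C * 2 ^ ((k : ℝ) * ((a : ℝ) - 1))) * eLpNorm f p volume := by
  classical
  -- basic constants
  set P : ℝ := ∏ i, ‖mvec i‖ with hPdef
  have hP0 : 0 ≤ P := Finset.prod_nonneg fun i _ => norm_nonneg _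
  obtain ⟨B₁', hB₁'⟩ := hgb 1
  set B₁ : ℝ := max B₁' 0 with hB₁def
  have hB₁0 : 0 ≤ B₁ := le_max_right _ _
  have hB₁ : ∀ x, ‖iteratedFDeriv ℝ 1 g x‖ ≤ B₁ := fun x => (hB₁' x).trans (le_max_left _ _)
  obtain ⟨B₀', hB₀'⟩ := hgb 0
  set B₀ : ℝ := max B₀' 0 with hB₀def
  have hB₀ : ∀ x, ‖g x‖ ≤ B₀ := by
    intro x
    rw [← norm_iteratedFDeriv_zero (𝕜 := ℝ) (f := g) (x := x)]
    exact (hB₀' x).trans (le_max_left _ _)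
  -- Lipschitz bound for g
  have hLip : ∀ x y : EuclideanSpace ℝ (Fin N), |g x - g y| ≤ B₁ * ‖x - y‖ := by
    intro x y
    rw [← Real.norm_eq_abs]
    refine Convex.norm_image_sub_le_of_norm_fderiv_le
      (fun z _ => (hg.differentiable (by simp)).differentiableAt) (fun z _ => ?_) convex_univ
      (Set.mem_univ y) (Set.mem_univ x)
    refine le_trans (ContinuousLinearMap.opNorm_le_bound _
      (norm_nonneg (iteratedFDeriv ℝ 1 g z)) fun v => ?_) (hB₁ z)
    have hfd : fderiv ℝ g z v = iteratedFDeriv ℝ 1 g z (fun _ => v) := by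
      rw [iteratedFDeriv_one_apply]
    rw [hfd]
    calc ‖iteratedFDeriv ℝ 1 g z (fun _ => v)‖ ≤
        ‖iteratedFDeriv ℝ 1 g z‖ * ∏ _i : Fin 1, ‖v‖ :=
          (iteratedFDeriv ℝ 1 g z).le_opNorm _
      _ = ‖iteratedFDeriv ℝ 1 g z‖ * ‖v‖ := by simp
  -- the kernel K
  set K : EuclideanSpace ℝ (Fin N) → ℝ := fun w => iteratedFDeriv ℝ a (⇑ψ) w mvec with hKdef
  have hKc : Continuous K :=
    (ContinuousEvalConst.continuous_eval_const mvec).comp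
      ((ψ.smooth ⊤).continuous_iteratedFDeriv (mod_cast le_top))
  have hKb : ∀ w, |K w| ≤ ‖iteratedFDeriv ℝ a (⇑ψ) w‖ * P :=
    fun w => (iteratedFDeriv ℝ a (⇑ψ) w).le_opNorm mvec
  -- Schwartz decay
  obtain ⟨Cψ, hCψ0, hCψ⟩ : ∃ Cψ : ℝ, 0 ≤ Cψ ∧ ∀ w : EuclideanSpace ℝ (Fin N),
      ‖iteratedFDeriv ℝ a (⇑ψ) w‖ ≤ Cψ * (1 + ‖w‖) ^ (-((N : ℝ) + 1)) := by
    refine ⟨2 ^ (N+1) * ((Finset.Iic (N+1, a)).sup fun m => SchwartzMap.seminorm ℝ m.1 m.2) ψ,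
      by positivity, fun w => ?_⟩
    have h := SchwartzMap.one_add_le_sup_seminorm_apply (𝕜 := ℝ) (m := (N+1, a))
      (le_refl (N+1)) (le_refl a) ψ w
    have hpos : (0:ℝ) < (1 + ‖w‖) ^ (N+1) := by positivity
    have hA : (1 + ‖w‖) ^ (-((N : ℝ) + 1)) = ((1 + ‖w‖) ^ (N+1 : ℕ))⁻¹ := by
      rw [Real.rpow_neg (by positivity), ← Real.rpow_natCast (1 + ‖w‖) (N+1)]
      push_cast
      ring_nf
    rw [hA, ← div_eq_mul_inv, le_div_iff₀ hpos, mul_comm]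
    simpa using h
  -- the weight φ and its integral
  set φ : EuclideanSpace ℝ (Fin N) → ℝ := fun w => ‖w‖ * |K w| with hφdef
  have hφ0 : ∀ w, 0 ≤ φ w := fun w => mul_nonneg (norm_nonneg _) (abs_nonneg _)
  have hφint : Integrable φ volume := by
    have h1 := ψ.integrable_pow_mul_iteratedFDeriv volume 1 a
    refine ((h1.const_mul P).mono' ?_ (ae_of_all _ fun w => ?_))
    · exact (continuous_norm.mul hKc.abs).aestronglyMeasurable
    · simp only [pow_one, Real.norm_eq_abs]
      rw [abs_of_nonneg (hφ0 w)]
      calc φ w = ‖w‖ * |K w| := rfl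
        _ ≤ ‖w‖ * (‖iteratedFDeriv ℝ a (⇑ψ) w‖ * P) :=
            mul_le_mul_of_nonneg_left (hKb w) (norm_nonneg w)
        _ = P * (‖w‖ * ‖iteratedFDeriv ℝ a (⇑ψ) w‖) := by ring
  set M₀ : ℝ := ∫ w, φ w with hM₀def
  have hM₀0 : 0 ≤ M₀ := integral_nonneg hφ0
  -- the constant
  refine ⟨max 1 (B₁ * M₀ * 2 ^ ((1:ℝ) - (a:ℝ))), lt_of_lt_of_le one_pos (le_max_left _ _),
    fun k hk p hp f hf => ?_⟩
  set C : ℝ := max 1 (B₁ * M₀ * 2 ^ ((1:ℝ) - (a:ℝ))) with hCdef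
  -- dilation parameters
  set r : ℝ := (2:ℝ) ^ ((k:ℝ) - 1) with hrdef
  have hr0 : (0:ℝ) < r := Real.rpow_pos_of_pos two_pos _
  have hr1 : (1:ℝ) ≤ r := by
    have hk1 : (1:ℝ) ≤ (k:ℝ) := by exact_mod_cast hk
    have h2 : (2:ℝ) ^ (0:ℝ) ≤ (2:ℝ) ^ ((k:ℝ) - 1) :=
      Real.rpow_le_rpow_of_exponent_le one_le_two (by linarith)
    simpa using h2
  set c : ℝ := (2:ℝ) ^ (((k:ℝ) - 1) * ((N:ℝ) + (a:ℝ))) with hcdef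
  have hc0 : (0:ℝ) < c := Real.rpow_pos_of_pos two_pos _
  set Φ : EuclideanSpace ℝ (Fin N) → ℝ := fun w => c * K (r • w) with hΦdef
  have hΦc : Continuous Φ := continuous_const.mul (hKc.comp (continuous_id.const_smul r))
  have hΦbd : ∀ w, |Φ w| ≤ (c * (Cψ * P)) * (1 + ‖w‖) ^ (-((N : ℝ) + 1)) := by
    intro w
    have habs : |Φ w| = c * |K (r • w)| := by
      rw [hΦdef]; simp only []; rw [abs_mul, abs_of_nonneg hc0.le]
    rw [habs]
    calc c * |K (r • w)| ≤ c * ((Cψ * (1 + ‖r • w‖) ^ (-((N:ℝ)+1))) * P) := by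
          refine mul_le_mul_of_nonneg_left ?_ hc0.le
          exact (hKb _).trans (mul_le_mul_of_nonneg_right (hCψ _) hP0)
      _ ≤ c * ((Cψ * (1 + ‖w‖) ^ (-((N:ℝ)+1))) * P) := by
          refine mul_le_mul_of_nonneg_left
            (mul_le_mul_of_nonneg_right (mul_le_mul_of_nonneg_left ?_ hCψ0) hP0) hc0.le
          refine Real.rpow_le_rpow_of_nonpos (by positivity) ?_
            (by simp only [neg_nonpos]; positivity)
          have hsm : ‖r • w‖ = r * ‖w‖ := by
            rw [norm_smul, Real.norm_eq_abs, abs_of_nonneg hr0.le]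
          rw [hsm]
          nlinarith [norm_nonneg w]
      _ = (c * (Cψ * P)) * (1 + ‖w‖) ^ (-((N:ℝ)+1)) := by ring
  have hΦmem : ∀ q' : ℝ≥0∞, 1 ≤ q' → MemLp Φ q' volume :=
    fun q' hq' => memLp_decay' Φ hΦc _ (by positivity) hΦbd q' hq'
  -- integrability of the integrands
  set q : ℝ≥0∞ := (1 - p⁻¹)⁻¹ with hqdef
  have hq1 : 1 ≤ q := by
    rw [hqdef, ← ENNReal.inv_le_one, inv_inv]
    exact tsub_le_self
  have hpq : (1:ℝ≥0∞)/1 = 1/q + 1/p := by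
    simp only [one_div, inv_one, hqdef, inv_inv]
    exact (tsub_add_cancel_of_le (ENNReal.inv_le_one.mpr hp)).symm
  have hint1 : ∀ x, Integrable (fun y => Φ (x - y) * f y) volume := by
    intro x
    have hmem : MemLp (fun y => Φ (x - y)) q volume := by
      have h := (hΦmem q hq1).comp_measurePreserving
        (Measure.measurePreserving_sub_left volume x)
      exact h
    have h2 := memLp_one_iff_integrable.mp (haveI : ENNReal.HolderTriple q p 1 := ⟨by simpa using hpq.symm⟩; MemLp.smul hf hmem)
    have h3 : (fun y => Φ (x - y)) • f = fun y => Φ (x - y) * f y := by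
      funext y; simp [Pi.smul_apply', smul_eq_mul]
    rwa [h3] at h2
  have hint2 : ∀ x, Integrable (fun y => Φ (x - y) * (g y * f y)) volume := by
    intro x
    have h2 := (hint1 x).bdd_mul (c := B₀) hg.continuous.aestronglyMeasurable (ae_of_all _ hB₀)
    exact h2.congr (ae_of_all _ fun y => by ring)
  -- measurable representative of f, and the ENNReal-valued functions
  set f' := hf.1.mk f with hf'def
  set F : EuclideanSpace ℝ (Fin N) → ℝ≥0∞ := fun y => (‖f' y‖₊ : ℝ≥0∞) with hFdef
  have hFmeas : Measurable F := hf.1.stronglyMeasurable_mk.measurable.nnnorm.coe_nnreal_ennreal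
  set H : EuclideanSpace ℝ (Fin N) → ℝ≥0∞ :=
    fun z => ENNReal.ofReal (B₁ * (‖z‖ * |Φ z|)) with hHdef
  have hHmeas : Measurable H := by
    refine ENNReal.measurable_ofReal.comp ?_
    exact (continuous_const.mul (continuous_norm.mul hΦc.abs)).measurable
  have hkey : ∀ z, B₁ * (‖z‖ * |Φ z|) = B₁ * c * r⁻¹ * φ (r • z) := by
    intro z
    have h1 : φ (r • z) = r * (‖z‖ * |K (r • z)|) := by
      rw [hφdef]; simp only []
      rw [norm_smul, Real.norm_eq_abs, abs_of_nonneg hr0.le]; ring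
    have h2 : |Φ z| = c * |K (r • z)| := by
      rw [hΦdef]; simp only []; rw [abs_mul, abs_of_nonneg hc0.le]
    rw [h1, h2]
    field_simp
  -- the pointwise commutator estimate
  have hpoint : ∀ x, (‖g x * (∫ y, Φ (x - y) * f y) -
      ∫ y, Φ (x - y) * (g y * f y)‖₊ : ℝ≥0∞) ≤ ∫⁻ y, H (x - y) * F y := by
    intro x
    have e1 : g x * (∫ y, Φ (x - y) * f y) - ∫ y, Φ (x - y) * (g y * f y)
        = ∫ y, (g x * (Φ (x - y) * f y) - Φ (x - y) * (g y * f y)) := by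
      rw [integral_sub ((hint1 x).const_mul (g x)) (hint2 x), integral_const_mul]
    rw [e1]
    calc (‖∫ y, (g x * (Φ (x - y) * f y) - Φ (x - y) * (g y * f y))‖₊ : ℝ≥0∞)
        ≤ ∫⁻ y, ‖g x * (Φ (x - y) * f y) - Φ (x - y) * (g y * f y)‖₊ :=
          enorm_integral_le_lintegral_enorm _
      _ ≤ ∫⁻ y, H (x - y) * (‖f y‖₊ : ℝ≥0∞) := by
          refine lintegral_mono fun y => ?_
          rw [← enorm_eq_nnnorm, Real.enorm_eq_ofReal_abs, ← enorm_eq_nnnorm, Real.enorm_eq_ofReal_abs, hHdef]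
          simp only []
          rw [← ENNReal.ofReal_mul (by
            exact mul_nonneg hB₁0 (mul_nonneg (norm_nonneg _) (abs_nonneg _)))]
          refine ENNReal.ofReal_le_ofReal ?_
          have e2 : g x * (Φ (x - y) * f y) - Φ (x - y) * (g y * f y)
              = (g x - g y) * (Φ (x - y) * f y) := by ring
          rw [e2]
          calc |(g x - g y) * (Φ (x - y) * f y)|
              = (|g x - g y| * |Φ (x - y)|) * |f y| := by rw [abs_mul, abs_mul]; ring
            _ ≤ ((B₁ * ‖x - y‖) * |Φ (x - y)|) * |f y| := by
                refine mul_le_mul_of_nonneg_right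
                  (mul_le_mul_of_nonneg_right (hLip x y) (abs_nonneg _)) (abs_nonneg _)
            _ = B₁ * (‖x - y‖ * |Φ (x - y)|) * |f y| := by ring
      _ = ∫⁻ y, H (x - y) * F y := by
          refine lintegral_congr_ae ?_
          filter_upwards [hf.1.ae_eq_mk] with y hy
          rw [hFdef]
          simp only []
          rw [hy]
  -- the kernel integral
  have hHint : ∫⁻ z, H z = ENNReal.ofReal (B₁ * c * r⁻¹ * ((r ^ N)⁻¹ * M₀)) := by
    have hintg : Integrable (fun z => B₁ * (‖z‖ * |Φ z|)) volume := by
      refine (((hφint.comp_smul hr0.ne').const_mul (B₁ * c * r⁻¹)).congr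
        (ae_of_all _ fun z => ?_))
      exact (hkey z).symm
    rw [hHdef]
    simp only []
    rw [← ofReal_integral_eq_lintegral_ofReal hintg (ae_of_all _ fun z =>
      mul_nonneg hB₁0 (mul_nonneg (norm_nonneg _) (abs_nonneg _)))]
    congr 1
    calc ∫ z, B₁ * (‖z‖ * |Φ z|) = ∫ z, B₁ * c * r⁻¹ * φ (r • z) := by simp_rw [hkey]
      _ = B₁ * c * r⁻¹ * ∫ z, φ (r • z) := integral_const_mul _ _
      _ = B₁ * c * r⁻¹ * ((r ^ N)⁻¹ * M₀) := by
          rw [MeasureTheory.Measure.integral_comp_smul volume φ r, finrank_euclideanSpace_fin,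
            abs_of_nonneg (by positivity), smul_eq_mul, hM₀def]
  have hHfin : ∫⁻ z, H z ≠ ∞ := by rw [hHint]; exact ENNReal.ofReal_ne_top
  -- the numerical bound
  have hreal : B₁ * c * r⁻¹ * ((r ^ N)⁻¹ * M₀) ≤ C * 2 ^ ((k:ℝ) * ((a:ℝ) - 1)) := by
    have hrN : (r:ℝ) ^ N = (2:ℝ) ^ (((k:ℝ) - 1) * (N:ℝ)) := by
      rw [hrdef, ← Real.rpow_natCast ((2:ℝ) ^ ((k:ℝ)-1)) N, ← Real.rpow_mul (by norm_num)]
    have hscale : c * r⁻¹ * (r ^ N)⁻¹ = (2:ℝ) ^ (((k:ℝ) - 1) * ((a:ℝ) - 1)) := by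
      rw [hcdef, hrdef, hrN, ← Real.rpow_neg (by norm_num), ← Real.rpow_neg (by norm_num),
        ← Real.rpow_add (by norm_num), ← Real.rpow_add (by norm_num)]
      congr 1; ring
    calc B₁ * c * r⁻¹ * ((r ^ N)⁻¹ * M₀) = (B₁ * M₀) * (c * r⁻¹ * (r ^ N)⁻¹) := by ring
      _ = (B₁ * M₀) * ((2:ℝ) ^ ((1:ℝ) - (a:ℝ)) * 2 ^ ((k:ℝ) * ((a:ℝ)-1))) := by
          rw [hscale, ← Real.rpow_add (by norm_num)]; congr 1; ring
      _ = (B₁ * M₀ * 2 ^ ((1:ℝ) - (a:ℝ))) * 2 ^ ((k:ℝ) * ((a:ℝ)-1)) := by ring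
      _ ≤ C * 2 ^ ((k:ℝ) * ((a:ℝ)-1)) :=
          mul_le_mul_of_nonneg_right (le_max_right _ _) (by positivity)
  have hIle : ∫⁻ z, H z ≤ ENNReal.ofReal (C * 2 ^ ((k:ℝ) * ((a:ℝ) - 1))) := by
    rw [hHint]; exact ENNReal.ofReal_le_ofReal hreal
  -- rewrite the goal
  have hEq : (fun x => g x * (∫ y, (2 ^ (((k : ℝ) - 1) * ((N : ℝ) + a)) *
        iteratedFDeriv ℝ a (⇑ψ) ((2 : ℝ) ^ ((k : ℝ) - 1) • (x - y)) mvec) * f y) -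
        ∫ y, (2 ^ (((k : ℝ) - 1) * ((N : ℝ) + a)) *
        iteratedFDeriv ℝ a (⇑ψ) ((2 : ℝ) ^ ((k : ℝ) - 1) • (x - y)) mvec) * (g y * f y)) =
      fun x => g x * (∫ y, Φ (x - y) * f y) - ∫ y, Φ (x - y) * (g y * f y) := rfl
  rw [hEq]
  refine le_trans ?_ (mul_le_mul_left hIle _)
  rcases eq_or_ne p ∞ with rfl | hptop
  · rw [eLpNorm_exponent_top, eLpNormEssSup]
    have hFtop : essSup F volume = eLpNorm f ⊤ volume := by
      rw [eLpNorm_exponent_top, eLpNormEssSup_congr_ae hf.1.ae_eq_mk, eLpNormEssSup]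
      rfl
    calc essSup (fun x => (‖g x * (∫ y, Φ (x - y) * f y) -
            ∫ y, Φ (x - y) * (g y * f y)‖₊ : ℝ≥0∞)) volume
        ≤ (∫⁻ z, H z) * essSup F volume :=
          essSup_le_of_ae_le _ (ae_of_all _ fun x =>
            le_trans (hpoint x) (young_top' H F hHmeas x))
      _ = (∫⁻ z, H z) * eLpNorm f ⊤ volume := by rw [hFtop]
  · have hp0 : p ≠ 0 := (lt_of_lt_of_le one_pos hp).ne'
    have hpr : (1:ℝ) ≤ p.toReal := by
      have := ENNReal.toReal_mono hptop hp
      simpa using this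
    rw [eLpNorm_eq_lintegral_rpow_enorm_toReal hp0 hptop]
    refine le_trans (ENNReal.rpow_le_rpow (lintegral_mono fun x =>
      ENNReal.rpow_le_rpow (hpoint x) (by positivity)) (by positivity)) ?_
    refine le_trans (young_fin' H F hHmeas hFmeas hHfin hpr) ?_
    have hFnorm : (∫⁻ y, F y ^ p.toReal) ^ (1/p.toReal) = eLpNorm f p volume := by
      rw [eLpNorm_congr_ae hf.1.ae_eq_mk, eLpNorm_eq_lintegral_rpow_enorm_toReal hp0 hptop]
      rfl
    rw [hFnorm]
end

section
/- Let φ_0, φ_1 ∈ 𝒮(ℝ^N) with φ_1 having all vanishing moments, define φ_j(x) = 2^{(j−1)N}φ_1(2^{(j−1)}x) for j ≥ 2, and suppose Σ_{j=0}^∞ φ_j = δ_0 in 𝒮'(ℝ^N). Suppose moreover supp φ_j ⊂ −𝕂 := {(x_1,x') : x_1 < −|x'|} for all j. Let ω = {x_1 > σ(x')} be a special Lipschitz domain with ‖∇σ‖_∞ < 1. Then there exists R ∈ ℤ_+ such that supp φ_j + ω^c ⊆ {x : x_1 − σ(x') < −2^{−j−R}} for all j ≥ 0; consequently, for any distribution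 f supported in ω^c, the function φ_j ∗ f vanishes on {x : x_1 − σ(x') ≥ −2^{−j−R}}. -/
open MeasureTheory

lemma aux_eps {X : Type*} [TopologicalSpace X] (K : Set X) (hK : IsCompact K)
    (g : X → ℝ) (hg : Continuous g) (h : ∀ x ∈ K, g x < 0) :
    ∃ ε > (0:ℝ), ∀ x ∈ K, g x ≤ -ε := by
  rcases K.eq_empty_or_nonempty with h0 | h0
  · exact ⟨1, one_pos, by simp [h0]⟩
  · obtain ⟨x0, hx0, hmax⟩ := hK.exists_isMaxOn h0 hg.continuousOn
    exact ⟨-g x0, by linarith [h x0 hx0], fun x hx => by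
      have := hmax hx; simpa using this⟩

/-- Support propagation for Rychkov-type convolutions: if the family `Φ_j` (built from
`φ₀, φ₁` by scaling, with vanishing moments for `φ₁` and `Σ Φ_j = δ₀`) is supported in
the negative cone `−𝕂 = {x₁ < −|x'|}`, and `ω = {x₁ > σ(x')}` is a special Lipschitz
domain with `‖∇σ‖_∞ < 1`, then there is `R ∈ ℤ₊` with
`supp Φ_j + ω^c ⊆ {x₁ − σ(x') < −2^{−j−R}}`; consequently `Φ_j ∗ f` vanishes on
`{x₁ − σ(x') ≥ −2^{−j−R}}` whenever `f` is supported in `ω^c`. -/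
theorem stmt_11 (N : ℕ) (hN : 1 ≤ N)
    (σ : EuclideanSpace ℝ (Fin (N - 1)) → ℝ) (L : NNReal) (hL : (L : ℝ) < 1)
    (hσ : LipschitzWith L σ)
    (φ₀ φ₁ : SchwartzMap (ℝ × EuclideanSpace ℝ (Fin (N - 1))) ℝ)
    (hc₀ : HasCompactSupport ⇑φ₀) (hc₁ : HasCompactSupport ⇑φ₁)
    (Φ : ℕ → (ℝ × EuclideanSpace ℝ (Fin (N - 1))) → ℝ)
    (hΦ0 : Φ 0 = ⇑φ₀) (hΦ1 : Φ 1 = ⇑φ₁)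
    (hscal : ∀ j, 2 ≤ j → ∀ x,
      Φ j x = 2 ^ (((j : ℝ) - 1) * N) * φ₁ ((2 : ℝ) ^ ((j : ℝ) - 1) • x))
    (hmom : ∀ γ : ℕ × (Fin (N - 1) → ℕ),
      (∫ x : ℝ × EuclideanSpace ℝ (Fin (N - 1)),
        (x.1 ^ γ.1 * ∏ i, x.2 i ^ γ.2 i) * φ₁ x) = 0)
    (hdelta : ∀ gtest : SchwartzMap (ℝ × EuclideanSpace ℝ (Fin (N - 1))) ℝ,
      HasSum (fun j => ∫ x, Φ j x * gtest x) (gtest 0))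
    (hsupp : ∀ j, tsupport (Φ j) ⊆ {x : ℝ × EuclideanSpace ℝ (Fin (N - 1)) | x.1 < -‖x.2‖}) :
    ∃ R : ℕ, 0 < R ∧
      (∀ (j : ℕ), ∀ a ∈ tsupport (Φ j), ∀ y : ℝ × EuclideanSpace ℝ (Fin (N - 1)),
        ¬ σ y.2 < y.1 → (a + y).1 - σ (a + y).2 < -2 ^ (-(j : ℝ) - R)) ∧
      (∀ f : (ℝ × EuclideanSpace ℝ (Fin (N - 1))) → ℝ, LocallyIntegrable f volume →
        (∀ x, σ x.2 < x.1 → f x = 0) →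
        ∀ (j : ℕ) (x : ℝ × EuclideanSpace ℝ (Fin (N - 1))),
          -2 ^ (-(j : ℝ) - R) ≤ x.1 - σ x.2 → (∫ y, Φ j (x - y) * f y) = 0) := by
  have hgcont : Continuous (fun x : ℝ × EuclideanSpace ℝ (Fin (N - 1)) =>
      x.1 + (L : ℝ) * ‖x.2‖) :=
    continuous_fst.add (continuous_const.mul (continuous_norm.comp continuous_snd))
  have hcone : ∀ x : ℝ × EuclideanSpace ℝ (Fin (N - 1)),
      x.1 < -‖x.2‖ → x.1 + (L : ℝ) * ‖x.2‖ < 0 := by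
    intro x hx
    have h1 : (L : ℝ) * ‖x.2‖ ≤ ‖x.2‖ := by
      have := norm_nonneg x.2; nlinarith
    linarith
  obtain ⟨ε₀, hε₀, hK₀⟩ := aux_eps (tsupport ⇑φ₀) hc₀ _ hgcont
    (fun x hx => hcone x (hsupp 0 (hΦ0 ▸ hx)))
  obtain ⟨ε₁, hε₁, hK₁⟩ := aux_eps (tsupport ⇑φ₁) hc₁ _ hgcont
    (fun x hx => hcone x (hsupp 1 (hΦ1 ▸ hx)))
  set ε : ℝ := min ε₀ (2 * ε₁) with hε_def
  have hεpos : 0 < ε := lt_min hε₀ (by linarith)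
  obtain ⟨n, hn⟩ := exists_pow_lt_of_lt_one hεpos (by norm_num : (1/2 : ℝ) < 1)
  refine ⟨n + 1, Nat.succ_pos n, ?_⟩
  have hRlt : (2 : ℝ) ^ (-((n+1 : ℕ) : ℝ)) < ε := by
    have h1 : (2 : ℝ) ^ (-((n+1 : ℕ) : ℝ)) = (1/2 : ℝ) ^ (n+1) := by
      rw [Real.rpow_neg (by norm_num), Real.rpow_natCast, one_div, inv_pow]
    have h2 : (1/2 : ℝ) ^ (n+1) ≤ (1/2 : ℝ) ^ n := by
      apply pow_le_pow_of_le_one (by norm_num) (by norm_num); omega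
    rw [h1]; linarith
  set R : ℕ := n + 1 with hR_def
  -- key bound on the support
  have key : ∀ j : ℕ, ∀ a ∈ tsupport (Φ j),
      a.1 + (L : ℝ) * ‖a.2‖ ≤ -ε * 2 ^ (-(j:ℝ)) := by
    intro j a ha
    rcases Nat.lt_or_ge j 2 with hj | hj
    · interval_cases j
      · have h := hK₀ a (hΦ0 ▸ ha)
        have hε' : ε ≤ ε₀ := min_le_left _ _
        norm_num; linarith
      · have h := hK₁ a (hΦ1 ▸ ha)
        have hε' : ε ≤ 2 * ε₁ := min_le_right _ _
        norm_num [Real.rpow_neg_one]; linarith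
    · set s : ℝ := (2:ℝ) ^ ((j:ℝ) - 1) with hs_def
      have hs : 0 < s := Real.rpow_pos_of_pos (by norm_num) _
      have hmem : s • a ∈ tsupport ⇑φ₁ := by
        have hsub : tsupport (Φ j) ⊆
            (fun x : ℝ × EuclideanSpace ℝ (Fin (N - 1)) => s • x) ⁻¹' tsupport ⇑φ₁ := by
          apply closure_minimal
          · intro x hx
            have heq := hscal j hj x
            have : φ₁ (s • x) ≠ 0 := by
              intro h0; apply hx; rw [heq, h0, mul_zero]
            exact subset_closure this
          · exact (isClosed_tsupport _).preimage (continuous_const_smul s)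
        exact hsub ha
      have hb := hK₁ _ hmem
      have hfst : (s • a).1 = s * a.1 := rfl
      have hsnd : ‖(s • a).2‖ = s * ‖a.2‖ := by
        have h2 : (s • a).2 = s • a.2 := rfl
        rw [h2, norm_smul, Real.norm_eq_abs, abs_of_pos hs]
      have hb' : s * a.1 + (L:ℝ) * (s * ‖a.2‖) ≤ -ε₁ := by
        rw [← hfst, ← hsnd]; exact hb
      have hga : a.1 + (L:ℝ) * ‖a.2‖ ≤ -ε₁ * (1 / s) := by
        rw [mul_one_div, le_div_iff₀ hs]; nlinarith
      have hsinv : 1 / s = 2 * (2:ℝ) ^ (-(j:ℝ)) := by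
        have h3 : (2:ℝ) * (2:ℝ)^(-(j:ℝ)) = (2:ℝ)^(1 + -(j:ℝ)) := by
          rw [Real.rpow_add (by norm_num), Real.rpow_one]
        rw [h3, hs_def, one_div, ← Real.rpow_neg (by norm_num),
          show (1 + -(j:ℝ)) = -((j:ℝ)-1) by ring]
      have hε' : ε ≤ 2 * ε₁ := min_le_right _ _
      have hpow : (0:ℝ) < (2:ℝ) ^ (-(j:ℝ)) := Real.rpow_pos_of_pos (by norm_num) _
      rw [hsinv] at hga
      nlinarith
  have hpow_split : ∀ j : ℕ, (2:ℝ) ^ (-(j:ℝ) - R) = (2:ℝ) ^ (-(j:ℝ)) * (2:ℝ) ^ (-(R:ℝ)) := by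
    intro j
    rw [show (-(j:ℝ) - (R:ℝ)) = -(j:ℝ) + -(R:ℝ) by ring,
      Real.rpow_add (by norm_num : (0:ℝ) < 2)]
  have part1 : ∀ (j : ℕ), ∀ a ∈ tsupport (Φ j), ∀ y : ℝ × EuclideanSpace ℝ (Fin (N - 1)),
      ¬ σ y.2 < y.1 → (a + y).1 - σ (a + y).2 < -2 ^ (-(j : ℝ) - (R:ℝ)) := by
    intro j a ha y hy
    push_neg at hy
    have hlip : σ y.2 - σ (a.2 + y.2) ≤ (L:ℝ) * ‖a.2‖ := by
      have h := hσ.dist_le_mul y.2 (a.2 + y.2)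
      have hd : dist y.2 (a.2 + y.2) = ‖a.2‖ := by
        rw [dist_eq_norm]; simp
      rw [hd] at h
      calc σ y.2 - σ (a.2 + y.2) ≤ |σ y.2 - σ (a.2 + y.2)| := le_abs_self _
        _ ≤ (L:ℝ) * ‖a.2‖ := by rw [← Real.dist_eq]; exact h
    have hadd1 : (a + y).1 = a.1 + y.1 := rfl
    have hadd2 : (a + y).2 = a.2 + y.2 := rfl
    have hkey := key j a ha
    have hpow : (0:ℝ) < (2:ℝ) ^ (-(j:ℝ)) := Real.rpow_pos_of_pos (by norm_num) _
    have hstrict : (2:ℝ) ^ (-(j:ℝ) - (R:ℝ)) < ε * (2:ℝ) ^ (-(j:ℝ)) := by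
      rw [hpow_split j]; nlinarith
    rw [hadd1, hadd2]
    nlinarith
  refine ⟨part1, ?_⟩
  intro f hfli hf j x hx
  have hzero : ∀ y : ℝ × EuclideanSpace ℝ (Fin (N - 1)), Φ j (x - y) * f y = 0 := by
    intro y
    by_cases h1 : Φ j (x - y) = 0
    · rw [h1, zero_mul]
    by_cases h2 : f y = 0
    · rw [h2, mul_zero]
    exfalso
    have ha : x - y ∈ tsupport (Φ j) := subset_closure h1
    have hy : ¬ σ y.2 < y.1 := fun h => h2 (hf y h)
    have hlt := part1 j (x - y) ha y hy
    rw [sub_add_cancel] at hlt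
    linarith
  simp only [hzero, integral_zero]
end

section
/- Let n ≥ 2, 1 ≤ q ≤ n−1, 1 ≤ k ≤ n−q, ε > 0, and 2 ≤ m real. Suppose 0 < τ_1 ≤ τ_2 ≤ ... ≤ τ_n with τ_1 ≤ C ε, τ_j ≤ C ε^{1/m} for all j, and γ := r/(r−1) where r := (n−q+1)m + 2q. Then with τ_2 ≥ c ε^{1/2}: ∫_{|w_1|<τ_1, ..., |w_n|<τ_n} (Σ_{l=1}^n |w_l|)^{−(2n−2k−1)γ} · (Π_{l=2}^{k} τ_l^{2})^{−γ} dVol(w) ≤ C' ε^{2γ} (sum over admissible k bounded by C'' ε^{2γ}), where the integral is over w ∈ ℂ^n with the stated polydisc constraints and C', C'' depend only on n, q, m, C, c. -/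
/-!
Every `|w_i|` is at most `∑ |w_l|`, so `(∑ |w_l|)^{-(2n-2k-1)γ}` is bounded by the product of
`|w_i|^{-s}` over the last `n - k` coordinates, where `s = (2n-2k-1)γ/(n-k) < 2`. The integral
over the polydisc then factors: the first `k` discs contribute their areas `π τ_i²`, the others
the radial integrals `2π τ_i^{2-s}/(2-s)`. Bounding `τ_l ≥ c ε^{1/2}` for `2 ≤ l ≤ k` and
`τ_l ≤ C ε^{1/m}` for `l > k` leaves `τ_1² ε^E`. With `γ = r/(r-1)` one checks
`2/m + E ≤ 2γ ≤ 2 + E`, so the two bounds `τ_1 ≤ C ε` (for `ε ≤ 1`) and `τ_1 ≤ C ε^{1/m}`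
(for `ε ≥ 1`) both give `τ_1² ε^E ≤ C² ε^{2γ}`.
-/

open MeasureTheory ENNReal Set

theorem lintegral_fin_pi_prod_eq_prod : ∀ {n : ℕ} {α : Fin n → Type*} [∀ i, MeasurableSpace (α i)]
    (μ : ∀ i, Measure (α i)) [∀ i, SigmaFinite (μ i)] {f : ∀ i, α i → ℝ≥0∞},
    (∀ i, Measurable (f i)) → ∫⁻ x, ∏ i, f i (x i) ∂Measure.pi μ = ∏ i, ∫⁻ x, f i x ∂μ i
  | 0, _, _, μ, _, f, _ => by simp
  | n + 1, α, _, μ, _, f, hf => by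
    rw [← (measurePreserving_piFinSuccAbove μ 0).symm.lintegral_comp_emb
      (MeasurableEquiv.measurableEmbedding _)]
    simp only [Fin.prod_univ_succAbove _ 0, MeasurableEquiv.piFinSuccAbove_symm_apply,
      Fin.insertNthEquiv_apply, Fin.insertNth_apply_same, Fin.insertNth_apply_succAbove]
    rw [← lintegral_fin_pi_prod_eq_prod (fun j => μ (Fin.succAbove 0 j)) fun j => hf _]
    exact lintegral_prod_mul (hf 0).aemeasurable
      (Finset.measurable_prod _ fun i _ => (hf _).comp (measurable_pi_apply i)).aemeasurable

theorem setLIntegral_univ_pi_prod {n : ℕ} {α : Fin n → Type*}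
    [∀ i, MeasurableSpace (α i)] (μ : ∀ i, Measure (α i)) [∀ i, SigmaFinite (μ i)]
    (s : ∀ i, Set (α i)) {f : ∀ i, α i → ℝ≥0∞} (hf : ∀ i, Measurable (f i)) :
    ∫⁻ x in univ.pi s, ∏ i, f i (x i) ∂Measure.pi μ = ∏ i, ∫⁻ x in s i, f i x ∂μ i := by
  rw [Measure.restrict_pi_pi]
  exact lintegral_fin_pi_prod_eq_prod _ hf

theorem lintegral_Ioo_rpow {p τ : ℝ} (hp : -1 < p) (hτ : 0 ≤ τ) :
    ∫⁻ r in Ioo 0 τ, ENNReal.ofReal (r ^ p) = ENNReal.ofReal (τ ^ (p + 1) / (p + 1)) := by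
  have hint : IntegrableOn (fun r : ℝ => r ^ p) (Ioc 0 τ) :=
    (intervalIntegral.intervalIntegrable_rpow' hp).1
  rw [← ofReal_integral_eq_lintegral_ofReal (hint.mono_set Ioo_subset_Ioc_self)
      ((ae_restrict_iff' measurableSet_Ioo).2 (ae_of_all _ fun r hr => Real.rpow_nonneg hr.1.le _)),
    ← integral_Ioc_eq_integral_Ioo, ← intervalIntegral.integral_of_le hτ,
    integral_rpow (Or.inl hp), Real.zero_rpow (by linarith), sub_zero]

theorem Complex.lintegral_ball_enorm_rpow {p τ : ℝ} (hp : -2 < p) (hτ : 0 ≤ τ) :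
    ∫⁻ z in Metric.ball (0 : ℂ) τ, ‖z‖ₑ ^ p =
      ENNReal.ofReal (2 * Real.pi * τ ^ (p + 2) / (p + 2)) := by
  have hpolar : ∀ q ∈ Ioi (0 : ℝ) ×ˢ Ioo (-Real.pi) Real.pi,
      ENNReal.ofReal q.1 • (Metric.ball (0 : ℂ) τ).indicator (‖·‖ₑ ^ p) (Complex.polarCoord.symm q)
        = (Ioo 0 τ).indicator (fun r => ENNReal.ofReal (r ^ (p + 1))) q.1 := by
    rintro ⟨r, θ⟩ ⟨hr : 0 < r, -⟩
    simp only [Set.indicator, Metric.mem_ball, dist_zero_right, Complex.norm_polarCoord_symm,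
      mem_Ioo, ← ofReal_norm, abs_of_pos hr, hr, true_and, smul_eq_mul]
    split_ifs
    · rw [ENNReal.ofReal_rpow_of_pos hr, ← ENNReal.ofReal_mul hr.le, Real.rpow_add hr,
        Real.rpow_one, mul_comm]
    · rw [mul_zero]
  have hradial : ∫⁻ r in Ioi 0, (Ioo 0 τ).indicator (fun r => ENNReal.ofReal (r ^ (p + 1))) r =
      ENNReal.ofReal (τ ^ (p + 2) / (p + 2)) := by
    rw [lintegral_indicator measurableSet_Ioo, Measure.restrict_restrict measurableSet_Ioo,
      Ioo_inter_Ioi, max_self, lintegral_Ioo_rpow (by linarith) hτ]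
    ring_nf
  have hangular := lintegral_prod_mul (μ := volume.restrict (Ioi (0 : ℝ)))
    (ν := volume.restrict (Ioo (-Real.pi) Real.pi))
    (f := (Ioo 0 τ).indicator fun r => ENNReal.ofReal (r ^ (p + 1))) (g := fun _ => 1)
    (by fun_prop (disch := exact measurableSet_Ioo)) aemeasurable_const
  simp only [mul_one] at hangular
  rw [← lintegral_indicator measurableSet_ball, ← Complex.lintegral_comp_polarCoord_symm,
    polarCoord_target, setLIntegral_congr_fun (measurableSet_Ioi.prod measurableSet_Ioo) hpolar,
    Measure.volume_eq_prod, ← Measure.prod_restrict, hangular, hradial, lintegral_one,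
    Measure.restrict_apply_univ, Real.volume_Ioo,
    ← ENNReal.ofReal_mul (div_nonneg (Real.rpow_nonneg hτ _) (by linarith))]
  ring_nf

theorem ENNReal.ofReal_rpow_le {x : ℝ} (hx : 0 ≤ x) (p : ℝ) :
    ENNReal.ofReal (x ^ p) ≤ ENNReal.ofReal x ^ p := by
  rcases hx.eq_or_lt with rfl | hx
  · rcases eq_or_ne p 0 with rfl | hp
    · simp
    · simp [Real.zero_rpow hp]
  · exact (ENNReal.ofReal_rpow_of_pos hx).ge

theorem ENNReal.rpow_neg_mul_card_le_prod {ι : Type*} (T : Finset ι) {x : ι → ℝ≥0∞} {S : ℝ≥0∞}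
    (hxS : ∀ i ∈ T, x i ≤ S) {a : ℝ} (ha : 0 ≤ a) :
    S ^ (-(a * T.card)) ≤ ∏ i ∈ T, x i ^ (-a) := by
  rw [neg_mul_eq_neg_mul, ENNReal.rpow_mul_natCast, ← Finset.prod_const]
  refine Finset.prod_le_prod' fun i hi => ?_
  rw [ENNReal.rpow_neg, ENNReal.rpow_neg]
  exact ENNReal.inv_le_inv.2 (ENNReal.rpow_le_rpow (hxS i hi) ha)

theorem Fin.card_filter_le_val (n k : ℕ) :
    (Finset.univ.filter fun i : Fin n => k ≤ (i : ℕ)).card = n - k := by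
  have h := Finset.card_filter_add_card_filter_not (s := Finset.univ) fun i : Fin n => (i : ℕ) < k
  simp only [Fin.card_filter_val_lt, not_lt, Finset.card_univ, Fintype.card_fin] at h
  omega

theorem ofReal_sum_norm_rpow_neg_le_prod {ι E : Type*} [Fintype ι] [SeminormedAddGroup E]
    (T : Finset ι) (w : ι → E) {a : ℝ} (ha : 0 ≤ a) :
    ENNReal.ofReal ((∑ i, ‖w i‖) ^ (-(a * T.card))) ≤ ∏ i ∈ T, ‖w i‖ₑ ^ (-a) := by
  refine (ENNReal.ofReal_rpow_le (Finset.sum_nonneg fun i _ => norm_nonneg _) _).trans ?_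
  rw [ENNReal.ofReal_sum_of_nonneg fun i _ => norm_nonneg _]
  simp only [ofReal_norm]
  exact ENNReal.rpow_neg_mul_card_le_prod T
    (fun i _ => Finset.single_le_sum (fun _ _ => zero_le) (Finset.mem_univ i)) ha

theorem lintegral_polydisc_sum_norm_rpow_neg_le {n k : ℕ} (hkn : k ≤ n) {s : ℝ} (hs0 : 0 ≤ s)
    (hs2 : s < 2) {ρ : ℕ → ℝ} (hρ : ∀ i < n, 0 ≤ ρ i) :
    ∫⁻ w in {w : Fin n → ℂ | ∀ i : Fin n, ‖w i‖ < ρ i},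
        ENNReal.ofReal ((∑ i, ‖w i‖) ^ (-(s * (n - k : ℕ)))) ≤
      ENNReal.ofReal ((∏ i ∈ Finset.range k, Real.pi * ρ i ^ 2) *
        ∏ i ∈ Finset.Ico k n, 2 * Real.pi * ρ i ^ (2 - s) / (2 - s)) := by
  let g : Fin n → ℂ → ℝ≥0∞ := fun i z => if k ≤ (i : ℕ) then ‖z‖ₑ ^ (-s) else 1
  let b : ℕ → ℝ := fun i =>
    if k ≤ i then 2 * Real.pi * ρ i ^ (2 - s) / (2 - s) else Real.pi * ρ i ^ 2
  have hb : ∀ i, i < n → 0 ≤ b i := fun i hi => by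
    have := hρ i hi
    unfold b; split_ifs <;> [exact div_nonneg (by positivity) (by linarith); positivity]
  have hpolydisc : {w : Fin n → ℂ | ∀ i : Fin n, ‖w i‖ < ρ i} =
      univ.pi fun i : Fin n => Metric.ball (0 : ℂ) (ρ i) := by
    ext w; simp
  have hpointwise : ∀ w : Fin n → ℂ,
      ENNReal.ofReal ((∑ i, ‖w i‖) ^ (-(s * (n - k : ℕ)))) ≤ ∏ i, g i (w i) := by
    intro w
    rw [← Fin.card_filter_le_val n k, ← Finset.prod_filter]
    exact ofReal_sum_norm_rpow_neg_le_prod _ w hs0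
  have hfactor : ∀ i : Fin n, ∫⁻ z in Metric.ball 0 (ρ i), g i z = ENNReal.ofReal (b i) := by
    intro i
    have hρi := hρ i i.2
    unfold g b
    split_ifs
    · rw [Complex.lintegral_ball_enorm_rpow (by linarith) hρi]
      ring_nf
    · rw [setLIntegral_one, Complex.volume_ball, ← NNReal.coe_real_pi,
        ENNReal.ofReal_mul (NNReal.coe_nonneg _), ENNReal.ofReal_coe_nnreal,
        ENNReal.ofReal_pow hρi, mul_comm]
  have hmeas : ∀ i, Measurable (g i) := fun i => by unfold g; split_ifs <;> fun_prop
  calc _ ≤ ∫⁻ w in univ.pi fun i : Fin n => Metric.ball (0 : ℂ) (ρ i), ∏ i, g i (w i) := by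
        rw [hpolydisc]; exact lintegral_mono hpointwise
    _ = ∏ i : Fin n, ENNReal.ofReal (b i) := by
        rw [volume_pi, setLIntegral_univ_pi_prod _ _ hmeas]
        exact Finset.prod_congr rfl fun i _ => hfactor i
    _ = _ := by
        rw [← ENNReal.ofReal_prod_of_nonneg fun (i : Fin n) _ => hb i i.2,
          Fin.prod_univ_eq_prod_range b, ← Finset.prod_range_mul_prod_Ico _ hkn]
        congr 2
        · exact Finset.prod_congr rfl fun i hi => if_neg (by simpa using hi)
        · exact Finset.prod_congr rfl fun i hi => if_pos (Finset.mem_Ico.1 hi).1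

theorem prod_range_pi_mul_sq_eq {k : ℕ} (hk : 1 ≤ k) (τ : ℕ → ℝ) :
    ∏ i ∈ Finset.range k, Real.pi * τ (i + 1) ^ 2 =
      Real.pi ^ k * (τ 1 ^ 2 * ∏ l ∈ Finset.Icc 2 k, τ l ^ 2) := by
  obtain ⟨k, rfl⟩ := Nat.exists_eq_add_of_le' hk
  have hIcc : Finset.Icc 2 (k + 1) = Finset.Ico 2 (2 + k) := by ext; simp; omega
  rw [Finset.prod_mul_distrib, Finset.prod_const, Finset.card_range, Finset.prod_range_succ',
    hIcc, Finset.prod_Ico_eq_prod_range, Nat.add_sub_cancel_left, mul_comm (∏ _ ∈ _, _)]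
  congr 3 with i
  ring_nf

theorem rpow_prod_le_of_le_of_nonpos {ι : Type*} (S : Finset ι) {f : ι → ℝ} {a p : ℝ}
    (ha : 0 < a) (hf : ∀ i ∈ S, a ≤ f i) (hp : p ≤ 0) :
    (∏ i ∈ S, f i) ^ p ≤ a ^ (S.card * p) := by
  rw [Real.rpow_natCast_mul ha.le, ← Finset.prod_const]
  exact Real.rpow_le_rpow_of_nonpos (by positivity) (Finset.prod_le_prod (fun _ _ => ha.le) hf) hp

theorem polydisc_weight_le {n k : ℕ} (hk : 1 ≤ k) (hkn : k ≤ n) {C c γ s : ℝ} (hγ : 1 ≤ γ)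
    (hs : s < 2) (hC : 0 < C) (hc : 0 < c) (m : ℝ) :
    ∃ K > 0, ∀ ε : ℝ, 0 < ε → ∀ τ : ℕ → ℝ,
      (∀ l, 1 ≤ l → l ≤ n → 0 < τ l) →
      (∀ i j, 1 ≤ i → i ≤ j → j ≤ n → τ i ≤ τ j) →
      (∀ l, 1 ≤ l → l ≤ n → τ l ≤ C * ε ^ (1 / m)) →
      c * ε ^ ((1 : ℝ) / 2) ≤ τ 2 →
      (∏ i ∈ Finset.range k, Real.pi * τ (i + 1) ^ 2) *
          (∏ i ∈ Finset.Ico k n, 2 * Real.pi * τ (i + 1) ^ (2 - s) / (2 - s)) /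
          (∏ l ∈ Finset.Icc 2 k, τ l ^ 2) ^ γ ≤
        K * (τ 1 ^ 2 * ε ^ (((k : ℝ) - 1) * (1 - γ) + (2 - s) / m * ((n : ℝ) - k))) := by
  refine ⟨Real.pi ^ k * (c ^ 2) ^ (((k : ℝ) - 1) * (1 - γ)) *
    (2 * Real.pi / (2 - s) * C ^ (2 - s)) ^ (n - k), by positivity, ?_⟩
  intro ε hε τ hτ hmono hτC hτ2
  have hsplit := prod_range_pi_mul_sq_eq hk τ
  set P := ∏ l ∈ Finset.Icc 2 k, τ l ^ 2
  have hP : 0 < P := Finset.prod_pos fun l hl => by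
    have := Finset.mem_Icc.1 hl; have := hτ l (by omega) (by omega); positivity
  have hPγ : P ^ (1 - γ) ≤ (c ^ 2 * ε) ^ (((k : ℝ) - 1) * (1 - γ)) := by
    have hsq : (c * ε ^ ((1 : ℝ) / 2)) ^ 2 = c ^ 2 * ε := by
      rw [mul_pow, ← Real.rpow_mul_natCast hε.le]; norm_num
    have h := rpow_prod_le_of_le_of_nonpos (Finset.Icc 2 k) (f := fun l => τ l ^ 2)
      (by positivity : 0 < c ^ 2 * ε) (fun l hl => by
        have := Finset.mem_Icc.1 hl
        rw [← hsq]
        gcongr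
        exact hτ2.trans (hmono 2 l (by norm_num) this.1 (by omega))) (by linarith : 1 - γ ≤ 0)
    rwa [Nat.card_Icc, show k + 1 - 2 = k - 1 by omega, Nat.cast_sub hk, Nat.cast_one] at h
  have hfactor_nonneg : ∀ i ∈ Finset.Ico k n, 0 ≤ 2 * Real.pi * τ (i + 1) ^ (2 - s) / (2 - s) :=
    fun i hi => by
      have := hτ (i + 1) (by omega) (by have := Finset.mem_Ico.1 hi; omega)
      exact div_nonneg (by positivity) (by linarith)
  have hfactor : ∀ i ∈ Finset.Ico k n, 2 * Real.pi * τ (i + 1) ^ (2 - s) / (2 - s) ≤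
      2 * Real.pi / (2 - s) * C ^ (2 - s) * ε ^ ((2 - s) / m) := fun i hi => by
    have hi := Finset.mem_Ico.1 hi
    have := hτ (i + 1) (by omega) (by omega)
    have : 0 ≤ 2 * Real.pi / (2 - s) := div_nonneg (by positivity) (by linarith)
    calc _ = 2 * Real.pi / (2 - s) * τ (i + 1) ^ (2 - s) := by ring
      _ ≤ 2 * Real.pi / (2 - s) * (C * ε ^ (1 / m)) ^ (2 - s) := by
        gcongr
        exact hτC (i + 1) (by omega) (by omega)
      _ = _ := by
        rw [Real.mul_rpow hC.le (by positivity), ← Real.rpow_mul hε.le]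
        ring_nf
  have hIco : ∏ i ∈ Finset.Ico k n, 2 * Real.pi * τ (i + 1) ^ (2 - s) / (2 - s) ≤
      (2 * Real.pi / (2 - s) * C ^ (2 - s) * ε ^ ((2 - s) / m)) ^ (n - k) := by
    rw [← Nat.card_Ico k n, ← Finset.prod_const]
    exact Finset.prod_le_prod hfactor_nonneg hfactor
  calc _ = Real.pi ^ k * τ 1 ^ 2 * P ^ (1 - γ) *
        ∏ i ∈ Finset.Ico k n, 2 * Real.pi * τ (i + 1) ^ (2 - s) / (2 - s) := by
        rw [hsplit, Real.rpow_sub hP, Real.rpow_one]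
        field_simp
    _ ≤ Real.pi ^ k * τ 1 ^ 2 * (c ^ 2 * ε) ^ (((k : ℝ) - 1) * (1 - γ)) *
        (2 * Real.pi / (2 - s) * C ^ (2 - s) * ε ^ ((2 - s) / m)) ^ (n - k) := by
        gcongr
        exact Finset.prod_nonneg hfactor_nonneg
    _ = _ := by
        rw [Real.mul_rpow (by positivity) hε.le, mul_pow, ← Real.rpow_mul_natCast hε.le,
          Real.rpow_add hε, Nat.cast_sub hkn]
        ring

theorem lintegral_polydisc_weighted_le {n k : ℕ} (hk : 1 ≤ k) (hkn : k ≤ n) {C c γ s : ℝ}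
    (hγ : 1 ≤ γ) (hs0 : 0 ≤ s) (hs2 : s < 2) (hC : 0 < C) (hc : 0 < c) (m : ℝ) :
    ∃ K > 0, ∀ ε : ℝ, 0 < ε → ∀ τ : ℕ → ℝ,
      (∀ l, 1 ≤ l → l ≤ n → 0 < τ l) →
      (∀ i j, 1 ≤ i → i ≤ j → j ≤ n → τ i ≤ τ j) →
      (∀ l, 1 ≤ l → l ≤ n → τ l ≤ C * ε ^ (1 / m)) →
      c * ε ^ ((1 : ℝ) / 2) ≤ τ 2 →
      ∫⁻ w in {w : Fin n → ℂ | ∀ l : Fin n, ‖w l‖ < τ (l.1 + 1)},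
          ENNReal.ofReal ((∑ l, ‖w l‖) ^ (-(s * (n - k : ℕ))) /
            (∏ l ∈ Finset.Icc 2 k, τ l ^ 2) ^ γ) ≤
        ENNReal.ofReal
          (K * (τ 1 ^ 2 * ε ^ (((k : ℝ) - 1) * (1 - γ) + (2 - s) / m * ((n : ℝ) - k)))) := by
  obtain ⟨K, hK, hweight⟩ := polydisc_weight_le hk hkn hγ hs2 hC hc m
  refine ⟨K, hK, fun ε hε τ hτ hmono hτC hτ2 => ?_⟩
  set P := ∏ l ∈ Finset.Icc 2 k, τ l ^ 2
  have hPγ : 0 < P ^ γ := Real.rpow_pos_of_pos (Finset.prod_pos fun l hl => by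
    have := Finset.mem_Icc.1 hl; have := hτ l (by omega) (by omega); positivity) _
  have hPγ_inv : (ENNReal.ofReal (P ^ γ))⁻¹ ≠ ⊤ :=
    ENNReal.inv_ne_top.2 (ENNReal.ofReal_pos.2 hPγ).ne'
  calc _ = (∫⁻ w in {w : Fin n → ℂ | ∀ l : Fin n, ‖w l‖ < τ (l.1 + 1)},
          ENNReal.ofReal ((∑ l, ‖w l‖) ^ (-(s * (n - k : ℕ))))) * (ENNReal.ofReal (P ^ γ))⁻¹ := by
        rw [← lintegral_mul_const' _ _ hPγ_inv]
        simp_rw [ENNReal.ofReal_div_of_pos hPγ, div_eq_mul_inv]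
    _ ≤ ENNReal.ofReal ((∏ i ∈ Finset.range k, Real.pi * τ (i + 1) ^ 2) *
          ∏ i ∈ Finset.Ico k n, 2 * Real.pi * τ (i + 1) ^ (2 - s) / (2 - s)) *
          (ENNReal.ofReal (P ^ γ))⁻¹ := by
        gcongr
        exact lintegral_polydisc_sum_norm_rpow_neg_le (ρ := fun i => τ (i + 1)) hkn hs0 hs2
          fun i hi => (hτ (i + 1) (by omega) (by omega)).le
    _ = ENNReal.ofReal ((∏ i ∈ Finset.range k, Real.pi * τ (i + 1) ^ 2) *
          (∏ i ∈ Finset.Ico k n, 2 * Real.pi * τ (i + 1) ^ (2 - s) / (2 - s)) / P ^ γ) := by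
        rw [ENNReal.ofReal_div_of_pos hPγ, div_eq_mul_inv]
    _ ≤ _ := ENNReal.ofReal_le_ofReal (hweight ε hε τ hτ hmono hτC hτ2)

section Exponents

variable {n k q m r γ s : ℝ}

theorem two_mul_add_two_le_of_eq (hr : r = (n - q + 1) * m + 2 * q) (hqn : q ≤ n + 1)
    (hm : 2 ≤ m) :
    2 * n + 2 ≤ r := by
  rw [hr]; nlinarith

theorem gamma_exponent_bounds (hr : r = (n - q + 1) * m + 2 * q) (hγ : γ = r / (r - 1))
    (hk : 0 ≤ k) (hq : 1 ≤ q) (hkq : k + q ≤ n) (hm : 2 ≤ m)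
    (hs : s = (2 * n - 2 * k - 1) * γ / (n - k)) :
    1 < γ ∧ 0 ≤ s ∧ s < 2 := by
  have hr2 := two_mul_add_two_le_of_eq hr (by linarith) hm
  have hγ1 : 1 < γ := by rw [hγ, one_lt_div (by linarith)]; linarith
  refine ⟨hγ1, hs ▸ div_nonneg (mul_nonneg (by linarith) (by linarith)) (by linarith), ?_⟩
  rw [hs, hγ, mul_div_assoc', div_div, div_lt_iff₀ (by nlinarith)]
  nlinarith

theorem exponent_window (hr : r = (n - q + 1) * m + 2 * q) (hγ : γ = r / (r - 1))
    (hk : 0 ≤ k) (hq : 1 ≤ q) (hkq : k + q ≤ n) (hm : 2 ≤ m)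
    (hs : s = (2 * n - 2 * k - 1) * γ / (n - k)) :
    2 / m + ((k - 1) * (1 - γ) + (2 - s) / m * (n - k)) ≤ 2 * γ ∧
      2 * γ ≤ 2 + ((k - 1) * (1 - γ) + (2 - s) / m * (n - k)) := by
  have hr2 := two_mul_add_two_le_of_eq hr (by linarith) hm
  have hγr : γ * (r - 1) = r := by rw [hγ]; field_simp [show r - 1 ≠ 0 by linarith]
  have hsk : s * (n - k) = (2 * n - 2 * k - 1) * γ := by
    rw [hs]; field_simp [show n - k ≠ 0 by linarith]
  set X := 2 * γ - ((k - 1) * (1 - γ) + (2 - s) / m * (n - k))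
  have hX : X * (m * (r - 1)) = 2 * m * (r - 1) - (m - 2) * (n - k - q) := by
    have hT : (2 - s) / m * (n - k) * m = (2 - s) * (n - k) := by field_simp
    simp only [X]
    linear_combination (2 * m + (k - 1) * m + (2 * (n - k) - 1)) * hγr - (r - 1) * hT +
      (r - 1) * hsk - hr
  have hm0 : 0 < m * (r - 1) := by nlinarith
  constructor
  · suffices 2 / m ≤ X by linarith
    rw [div_le_iff₀ (by linarith), ← mul_le_mul_iff_left₀ (show 0 < r - 1 by linarith)]
    nlinarith
  · suffices X ≤ 2 by linarith
    rw [← mul_le_mul_iff_left₀ hm0]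
    nlinarith

end Exponents

theorem mul_rpow_le_of_exponent_window {x K ε a b e t : ℝ} (hε : 0 < ε) (hK : 0 ≤ K)
    (ha : x ≤ K * ε ^ a) (hb : x ≤ K * ε ^ b) (hat : a + e ≤ t) (htb : t ≤ b + e) :
    x * ε ^ e ≤ K * ε ^ t := by
  have he := (Real.rpow_pos_of_pos hε e).le
  rcases le_total ε 1 with hε1 | hε1
  · calc x * ε ^ e ≤ K * ε ^ (b + e) := by
          rw [Real.rpow_add hε, ← mul_assoc]; exact mul_le_mul_of_nonneg_right hb he
      _ ≤ K * ε ^ t :=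
          mul_le_mul_of_nonneg_left (Real.rpow_le_rpow_of_exponent_ge hε hε1 htb) hK
  · calc x * ε ^ e ≤ K * ε ^ (a + e) := by
          rw [Real.rpow_add hε, ← mul_assoc]; exact mul_le_mul_of_nonneg_right ha he
      _ ≤ K * ε ^ t := mul_le_mul_of_nonneg_left (Real.rpow_le_rpow_of_exponent_le hε1 hat) hK

theorem sq_le_sq_mul_rpow {x C ε a : ℝ} (hx : 0 ≤ x) (hε : 0 ≤ ε) (h : x ≤ C * ε ^ a) :
    x ^ 2 ≤ C ^ 2 * ε ^ (2 * a) := by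
  calc x ^ 2 ≤ (C * ε ^ a) ^ 2 := pow_le_pow_left₀ hx h 2
    _ = C ^ 2 * ε ^ (2 * a) := by rw [mul_pow, ← Real.rpow_mul_natCast hε, mul_comm a]; norm_num

theorem stmt_18_general (n q k : ℕ) (hq1 : 1 ≤ q)
    (hk1 : 1 ≤ k) (hk2 : k ≤ n - q) (m C c : ℝ) (hm : 2 ≤ m) (hC : 0 < C) (hc : 0 < c) :
    ∃ C' > (0 : ℝ), ∀ ε : ℝ, 0 < ε → ∀ τ : ℕ → ℝ,
      (∀ l, 1 ≤ l → l ≤ n → 0 < τ l) →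
      (∀ i j, 1 ≤ i → i ≤ j → j ≤ n → τ i ≤ τ j) →
      τ 1 ≤ C * ε →
      (∀ l, 1 ≤ l → l ≤ n → τ l ≤ C * ε ^ (1 / m)) →
      c * ε ^ ((1 : ℝ) / 2) ≤ τ 2 →
      (∫⁻ w in {w : Fin n → ℂ | ∀ l : Fin n, ‖w l‖ < τ (l.1 + 1)},
          ENNReal.ofReal
            ((∑ l, ‖w l‖) ^
                (-((2 * (n : ℝ) - 2 * (k : ℝ) - 1) *
                  ((((n : ℝ) - q + 1) * m + 2 * q) / ((((n : ℝ) - q + 1) * m + 2 * q) - 1)))) /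
              (∏ l ∈ Finset.Icc 2 k, τ l ^ 2) ^
                ((((n : ℝ) - q + 1) * m + 2 * q) / ((((n : ℝ) - q + 1) * m + 2 * q) - 1)))) ≤
        ENNReal.ofReal (C' * ε ^
          (2 * ((((n : ℝ) - q + 1) * m + 2 * q) / ((((n : ℝ) - q + 1) * m + 2 * q) - 1)))) := by
  have hkq : (k : ℝ) + q ≤ n := by exact_mod_cast (by omega : k + q ≤ n)
  set r : ℝ := ((n : ℝ) - q + 1) * m + 2 * q with hr
  set γ : ℝ := r / (r - 1) with hγ
  set s : ℝ := (2 * (n : ℝ) - 2 * k - 1) * γ / (n - k) with hs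
  obtain ⟨hγ1, hs0, hs2⟩ := gamma_exponent_bounds hr hγ (Nat.cast_nonneg k)
    (by exact_mod_cast hq1) hkq hm hs
  obtain ⟨hlow, hhigh⟩ := exponent_window hr hγ (Nat.cast_nonneg k)
    (by exact_mod_cast hq1) hkq hm hs
  obtain ⟨K, hK, hintegral⟩ :=
    lintegral_polydisc_weighted_le (n := n) hk1 (by omega) hγ1.le hs0 hs2 hC hc m
  refine ⟨K * C ^ 2, by positivity, fun ε hε τ hτ hmono hτ1 hτC hτ2 => ?_⟩
  have hα : (2 * (n : ℝ) - 2 * k - 1) * γ = s * ((n - k : ℕ) : ℝ) := by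
    rw [Nat.cast_sub (by omega), hs]
    field_simp [show (n : ℝ) - k ≠ 0 by linarith [(by exact_mod_cast hq1 : (1 : ℝ) ≤ q)]]
  have hτ1pos := hτ 1 le_rfl (by omega)
  rw [hα, mul_assoc]
  refine (hintegral ε hε τ hτ hmono hτC hτ2).trans
    (ENNReal.ofReal_le_ofReal (mul_le_mul_of_nonneg_left ?_ hK.le))
  exact mul_rpow_le_of_exponent_window hε (sq_nonneg C)
    (sq_le_sq_mul_rpow hτ1pos.le hε.le (hτC 1 le_rfl (by omega)))
    (sq_le_sq_mul_rpow hτ1pos.le hε.le (by rwa [Real.rpow_one] : τ 1 ≤ C * ε ^ (1 : ℝ)))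
    (by rw [mul_one_div]; linarith) (by linarith)

/-- The anisotropic polydisc `L^γ` integral estimate: for `1 ≤ k ≤ n−q`,
`r := (n−q+1)m + 2q`, `γ := r/(r−1)`, and `0 < τ₁ ≤ ⋯ ≤ τ_n` with `τ₁ ≤ Cε`,
`τ_j ≤ Cε^{1/m}` and `τ₂ ≥ cε^{1/2}`, one has
`∫_{|w_l|<τ_l} (Σ|w_l|)^{−(2n−2k−1)γ} (Π_{l=2}^k τ_l²)^{−γ} dV ≤ C' ε^{2γ}`
with `C'` depending only on `n, q, m, C, c`. -/
theorem stmt_18 (n q k : ℕ) (hn : 2 ≤ n) (hq1 : 1 ≤ q) (hq2 : q ≤ n - 1)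
    (hk1 : 1 ≤ k) (hk2 : k ≤ n - q) (m C c : ℝ) (hm : 2 ≤ m) (hC : 0 < C) (hc : 0 < c) :
    ∃ C' > (0 : ℝ), ∀ ε : ℝ, 0 < ε → ∀ τ : ℕ → ℝ,
      (∀ l, 1 ≤ l → l ≤ n → 0 < τ l) →
      (∀ i j, 1 ≤ i → i ≤ j → j ≤ n → τ i ≤ τ j) →
      τ 1 ≤ C * ε →
      (∀ l, 1 ≤ l → l ≤ n → τ l ≤ C * ε ^ (1 / m)) →
      c * ε ^ ((1 : ℝ) / 2) ≤ τ 2 →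
      (∫⁻ w in {w : Fin n → ℂ | ∀ l : Fin n, ‖w l‖ < τ (l.1 + 1)},
          ENNReal.ofReal
            ((∑ l, ‖w l‖) ^
                (-((2 * (n : ℝ) - 2 * (k : ℝ) - 1) *
                  ((((n : ℝ) - q + 1) * m + 2 * q) / ((((n : ℝ) - q + 1) * m + 2 * q) - 1)))) /
              (∏ l ∈ Finset.Icc 2 k, τ l ^ 2) ^
                ((((n : ℝ) - q + 1) * m + 2 * q) / ((((n : ℝ) - q + 1) * m + 2 * q) - 1)))) ≤
        ENNReal.ofReal (C' * ε ^
          (2 * ((((n : ℝ) - q + 1) * m + 2 * q) / ((((n : ℝ) - q + 1) * m + 2 * q) - 1)))) :=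
  stmt_18_general n q k hq1 hk1 hk2 m C c hm hC hc
end
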